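/- arXiv:2502.00598 — 9 statements merged into one kernel-verified Lean document; each statement's English description precedes it below -/
import Mathlib

section
/- Let n, d ≥ 1 be positive integers and 1 ≤ i ≤ n. For any generalized n-dimensional rectangle R ⊆ ℤⁿ (a product of integer intervals, possibly degenerate) whose i-th interval contains at least 2dⁿ − d points, there exists a subset M ⊆ R such that: (1) for any distinct x, y ∈ M, the sup-metric distance ρ(x,y) = max_i |x(i) − y(i)| is at least d; (2) for every x ∈ R there exists a ∈ ℤ with x + a·e_i ∈ M. -/
/-- The sup metric on `ℤⁿ`, valued in `ℕ`. -/
def rho {n : ℕ} (x y : Fin n → ℤ) : ℕ := Finset.univ.sup fun i => (x i - y i).natAbs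

/-- A generalized `n`-dimensional rectangle `[a₁,b₁] × ⋯ × [aₙ,bₙ]` in `ℤⁿ`. -/
def genRect {n : ℕ} (a b : Fin n → ℤ) : Set (Fin n → ℤ) := {x | ∀ i, a i ≤ x i ∧ x i ≤ b i}

lemma geom_aux (d : ℤ) (m : ℕ) :
    ∑ k ∈ Finset.Icc 1 m, (d - 1) * d ^ k = d ^ (m + 1) - d := by
  induction m with
  | zero => simp
  | succ m ih =>
    rw [Finset.sum_Icc_succ_top (by omega), ih]
    ring

lemma digits_upper (d : ℤ) (hd : 1 ≤ d) {α : Type*} (s : Finset α) (e : α → ℕ) (m : ℕ)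
    (he1 : ∀ j ∈ s, 1 ≤ e j) (hem : ∀ j ∈ s, e j ≤ m)
    (heinj : ∀ j ∈ s, ∀ k ∈ s, e j = e k → j = k)
    (δ : α → ℤ) (hδ : ∀ j ∈ s, |δ j| ≤ d - 1) :
    |∑ j ∈ s, δ j * d ^ e j| ≤ d ^ (m + 1) - d := by
  classical
  have hpos : ∀ k : ℕ, (0:ℤ) ≤ d ^ k := fun k => pow_nonneg (by omega) k
  calc |∑ j ∈ s, δ j * d ^ e j| ≤ ∑ j ∈ s, |δ j * d ^ e j| := Finset.abs_sum_le_sum_abs _ _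
    _ ≤ ∑ j ∈ s, (d - 1) * d ^ e j := by
        apply Finset.sum_le_sum
        intro j hj
        rw [abs_mul, abs_of_nonneg (hpos _)]
        exact mul_le_mul_of_nonneg_right (hδ j hj) (hpos _)
    _ = ∑ k ∈ s.image e, (d - 1) * d ^ k := by
        rw [Finset.sum_image]
        exact heinj
    _ ≤ ∑ k ∈ Finset.Icc 1 m, (d - 1) * d ^ k := by
        apply Finset.sum_le_sum_of_subset_of_nonneg
        · intro k hk
          obtain ⟨j, hj, rfl⟩ := Finset.mem_image.mp hk
          exact Finset.mem_Icc.mpr ⟨he1 j hj, hem j hj⟩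
        · intro k _ _
          exact mul_nonneg (by omega) (hpos _)
    _ = d ^ (m + 1) - d := geom_aux d m

lemma digits_lower (d : ℤ) (hd : 1 ≤ d) {α : Type*} [DecidableEq α] (s : Finset α) (e : α → ℕ)
    (he1 : ∀ j ∈ s, 1 ≤ e j)
    (heinj : ∀ j ∈ s, ∀ k ∈ s, e j = e k → j = k)
    (δ : α → ℤ) (hδ : ∀ j ∈ s, |δ j| ≤ d - 1)
    (hne : ∃ j ∈ s, δ j ≠ 0) :
    d ≤ |∑ j ∈ s, δ j * d ^ e j| := by
  classical
  set t : Finset α := s.filter (fun j => δ j ≠ 0) with ht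
  have htne : t.Nonempty := by
    obtain ⟨j, hj, hj0⟩ := hne
    exact ⟨j, Finset.mem_filter.mpr ⟨hj, hj0⟩⟩
  have hsum : ∑ j ∈ s, δ j * d ^ e j = ∑ j ∈ t, δ j * d ^ e j := by
    rw [ht]
    exact (Finset.sum_filter_of_ne (fun j _ h => by
      intro h0; apply h; rw [h0, zero_mul])).symm
  -- pick j0 in t with maximal exponent
  obtain ⟨j0, hj0t, hj0max⟩ := t.exists_max_image e htne
  have hj0s : j0 ∈ s := (Finset.mem_filter.mp hj0t).1
  have hj0ne : δ j0 ≠ 0 := (Finset.mem_filter.mp hj0t).2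
  have hts : t ⊆ s := Finset.filter_subset _ _
  have hsplit : ∑ j ∈ t, δ j * d ^ e j
      = δ j0 * d ^ e j0 + ∑ j ∈ t.erase j0, δ j * d ^ e j :=
    (Finset.add_sum_erase _ (fun j => δ j * d ^ e j) hj0t).symm
  have he0 : 1 ≤ e j0 := he1 j0 hj0s
  have hrest : |∑ j ∈ t.erase j0, δ j * d ^ e j| ≤ d ^ e j0 - d := by
    have hsub : t.erase j0 ⊆ s := fun j hj => hts (Finset.mem_erase.mp hj).2
    have key := digits_upper d hd (t.erase j0) e (e j0 - 1)
      (fun j hj => he1 j (hsub hj))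
      (fun j hj => by
        have hjt := (Finset.mem_erase.mp hj).2
        have hjj0 := (Finset.mem_erase.mp hj).1
        have h1 : e j ≤ e j0 := hj0max j hjt
        have h2 : e j ≠ e j0 := fun h => hjj0 (heinj j (hts hjt) j0 hj0s h)
        omega)
      (fun j hj k hk => heinj j (hsub hj) k (hsub hk))
      δ (fun j hj => hδ j (hsub hj))
    rwa [Nat.sub_add_cancel he0] at key
  have hlead : d ^ e j0 ≤ |δ j0 * d ^ e j0| := by
    rw [abs_mul, abs_of_nonneg (pow_nonneg (by omega : (0:ℤ) ≤ d) _)]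
    have h1 : (1:ℤ) ≤ |δ j0| := by
      rcases abs_pos.mpr hj0ne with h
      omega
    nlinarith [pow_nonneg (by omega : (0:ℤ) ≤ d) (e j0)]
  rw [hsum, hsplit]
  have habs : |δ j0 * d ^ e j0| - |∑ j ∈ t.erase j0, δ j * d ^ e j|
      ≤ |δ j0 * d ^ e j0 + ∑ j ∈ t.erase j0, δ j * d ^ e j| := by
    have := abs_add_le (δ j0 * d ^ e j0 + ∑ j ∈ t.erase j0, δ j * d ^ e j)
      (-(∑ j ∈ t.erase j0, δ j * d ^ e j))
    simp only [add_neg_cancel_right, abs_neg] at this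
    linarith
  linarith

theorem stmt0 (n d : ℕ) (hn : 1 ≤ n) (hd : 1 ≤ d) (i : Fin n)
    (a b : Fin n → ℤ) (hab : ∀ j, a j ≤ b j)
    (hside : 2 * (d : ℤ) ^ n - d ≤ b i - a i + 1) :
    ∃ M ⊆ genRect a b,
      (∀ x ∈ M, ∀ y ∈ M, x ≠ y → d ≤ rho x y) ∧
      (∀ x ∈ genRect a b, ∃ c : ℤ, x + c • (Pi.single i 1 : Fin n → ℤ) ∈ M) := by
  classical
  have hd1 : (1:ℤ) ≤ (d:ℤ) := by exact_mod_cast hd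
  have hdn : (d:ℤ) ≤ (d:ℤ) ^ n := le_self_pow₀ hd1 (by omega)
  set s : ℤ := 2 * (d:ℤ) ^ n - d with hs_def
  have hs_pos : 0 < s := by simp only [hs_def]; linarith
  have hs_ged : (d:ℤ) ≤ s := by simp only [hs_def]; linarith
  -- exponent assignment
  set e : Fin n → ℕ := fun j => if (j:ℕ) < (i:ℕ) then (j:ℕ) + 1 else (j:ℕ) with he_def
  set S : Finset (Fin n) := Finset.univ.erase i with hS_def
  have hSi : ∀ j ∈ S, j ≠ i := fun j hj => (Finset.mem_erase.mp hj).1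
  have he1 : ∀ j ∈ S, 1 ≤ e j := by
    intro j hj
    have hji : (j:ℕ) ≠ (i:ℕ) := fun h => hSi j hj (Fin.ext h)
    simp only [he_def]
    split_ifs with h <;> omega
  have hem : ∀ j ∈ S, e j ≤ n - 1 := by
    intro j hj
    have hji : (j:ℕ) ≠ (i:ℕ) := fun h => hSi j hj (Fin.ext h)
    have hjn : (j:ℕ) < n := j.isLt
    have hin : (i:ℕ) < n := i.isLt
    simp only [he_def]
    split_ifs with h <;> omega
  have heinj : ∀ j ∈ S, ∀ k ∈ S, e j = e k → j = k := by
    intro j hj k hk h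
    have hji : (j:ℕ) ≠ (i:ℕ) := fun h => hSi j hj (Fin.ext h)
    have hki : (k:ℕ) ≠ (i:ℕ) := fun h => hSi k hk (Fin.ext h)
    apply Fin.ext
    simp only [he_def] at h
    split_ifs at h <;> omega
  -- weight function
  set w : (Fin n → ℤ) → ℤ := fun x => ∑ j ∈ S, x j * (d:ℤ) ^ e j with hw_def
  refine ⟨{x | x ∈ genRect a b ∧ s ∣ x i - w x}, fun x hx => hx.1, ?_, ?_⟩
  · -- separation
    intro x hx y hy hxy
    by_contra hcon
    push_neg at hcon
    have habs : ∀ j, |x j - y j| ≤ (d:ℤ) - 1 := by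
      intro j
      have h1 : (x j - y j).natAbs ≤ rho x y := by
        unfold rho; exact Finset.le_sup (f := fun k => (x k - y k).natAbs) (Finset.mem_univ j)
      have h2 : (x j - y j).natAbs < d := lt_of_le_of_lt h1 hcon
      have h3 : ((x j - y j).natAbs : ℤ) < (d:ℤ) := by exact_mod_cast h2
      rw [Int.natCast_natAbs] at h3
      linarith
    have hdvd : s ∣ (x i - y i) - (w x - w y) := by
      have := dvd_sub hx.2 hy.2
      have heq : (x i - w x) - (y i - w y) = (x i - y i) - (w x - w y) := by ring
      rwa [heq] at this
    have hΔ : w x - w y = ∑ j ∈ S, (x j - y j) * (d:ℤ) ^ e j := by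
      simp only [hw_def, ← Finset.sum_sub_distrib, sub_mul]
    by_cases hcase : ∀ j ∈ S, x j = y j
    · have hΔ0 : w x - w y = 0 := by
        rw [hΔ]
        apply Finset.sum_eq_zero
        intro j hj
        rw [hcase j hj, sub_self, zero_mul]
      have hdvd' : s ∣ x i - y i := by rwa [hΔ0, sub_zero] at hdvd
      have hxyi : x i ≠ y i := by
        intro h
        apply hxy
        funext j
        by_cases hji : j = i
        · rw [hji]; exact h
        · exact hcase j (Finset.mem_erase.mpr ⟨hji, Finset.mem_univ j⟩)
      have h0 : x i - y i = 0 := Int.eq_zero_of_abs_lt_dvd hdvd' (by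
        have := habs i
        linarith)
      exact hxyi (by linarith [sub_eq_zero.mp h0])
    · push_neg at hcase
      obtain ⟨j1, hj1S, hj1⟩ := hcase
      have hlow : (d:ℤ) ≤ |w x - w y| := by
        rw [hΔ]
        exact digits_lower (d:ℤ) hd1 S e he1 heinj _
          (fun j hj => habs j) ⟨j1, hj1S, sub_ne_zero.mpr hj1⟩
      have hup : |w x - w y| ≤ (d:ℤ) ^ n - d := by
        rw [hΔ]
        have := digits_upper (d:ℤ) hd1 S e (n - 1) he1 hem heinj _ (fun j hj => habs j)
        rwa [Nat.sub_add_cancel hn] at this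
      have h0 : (x i - y i) - (w x - w y) = 0 := by
        apply Int.eq_zero_of_abs_lt_dvd hdvd
        have h1 := habs i
        have h2 := abs_sub (x i - y i) (w x - w y)
        calc |(x i - y i) - (w x - w y)| ≤ |x i - y i| + |w x - w y| := abs_sub _ _
          _ ≤ ((d:ℤ) - 1) + ((d:ℤ)^n - d) := add_le_add h1 hup
          _ < s := by simp only [hs_def]; linarith
      have heq2 : x i - y i = w x - w y := by linarith
      have h3 := habs i
      rw [heq2] at h3
      linarith
  · -- covering
    intro x hx
    set r : ℤ := (w x - a i) % s with hr_def
    have hr0 : 0 ≤ r := Int.emod_nonneg _ (ne_of_gt hs_pos)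
    have hrs : r < s := Int.emod_lt_of_pos _ hs_pos
    refine ⟨a i + r - x i, ?_, ?_⟩
    · intro j
      by_cases hji : j = i
      · subst hji
        simp only [Pi.add_apply, Pi.smul_apply, Pi.single_eq_same, smul_eq_mul, mul_one]
        constructor <;> linarith
      · simp only [Pi.add_apply, Pi.smul_apply, Pi.single_eq_of_ne hji, smul_eq_mul, mul_zero,
          add_zero]
        exact hx j
    · have hwsame : w (x + (a i + r - x i) • (Pi.single i 1 : Fin n → ℤ)) = w x := by
        apply Finset.sum_congr rfl
        intro j hj
        have hji := hSi j hj
        simp [Pi.single_eq_of_ne hji]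
      rw [hwsame]
      simp only [Pi.add_apply, Pi.smul_apply, Pi.single_eq_same, smul_eq_mul, mul_one]
      refine ⟨-((w x - a i) / s), ?_⟩
      have := Int.emod_def (w x - a i) s
      simp only [← hr_def] at this
      linarith [this]
end

section
/- Let m ≥ 0 and d, k ≥ 1 be integers. Let I be an interval of ℤ and let 𝒥 be a collection of m subintervals of I, each of length at most d. If the length of I is at least 3d(2m + k + 1), then there exists a collection 𝒦 of k pairwise disjoint subintervals of I such that: (i) each K ∈ 𝒦 has length at least d; (ii) for distinct K₁, K₂ ∈ 𝒦, the distance ρ(K₁, K₂) = min{|s − t| : s ∈ K₁, t ∈ K₂} is at least d; (iii) for every J ∈ 𝒥 and K ∈ 𝒦, ρ(J, K) ≥ d. -/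
theorem stmt1 (m d k : ℕ) (hd : 1 ≤ d) (hk : 1 ≤ k) (a b : ℤ)
    (hlen : (3 * d * (2 * m + k + 1) : ℤ) ≤ b - a)
    (J : Fin m → ℤ × ℤ)
    (hJ : ∀ j, a ≤ (J j).1 ∧ (J j).1 < (J j).2 ∧ (J j).2 ≤ b ∧ (J j).2 - (J j).1 ≤ (d : ℤ)) :
    ∃ K : Fin k → ℤ × ℤ,
      (∀ l, a ≤ (K l).1 ∧ (K l).1 < (K l).2 ∧ (K l).2 ≤ b) ∧
      (∀ l, (d : ℤ) ≤ (K l).2 - (K l).1) ∧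
      (∀ l₁ l₂, l₁ ≠ l₂ →
        ∀ s ∈ Set.Icc (K l₁).1 (K l₁).2, ∀ t ∈ Set.Icc (K l₂).1 (K l₂).2, (d : ℤ) ≤ |s - t|) ∧
      (∀ j l, ∀ s ∈ Set.Icc (J j).1 (J j).2, ∀ t ∈ Set.Icc (K l).1 (K l).2, (d : ℤ) ≤ |s - t|) := by
  classical
  have hD1 : (1:ℤ) ≤ (d:ℤ) := by exact_mod_cast hd
  set q : Fin m → ℕ := fun j => ((J j).1 - a).toNat / (3 * d) with hqdef
  set Bad : Finset ℕ := Finset.univ.biUnion (fun j => ({q j, q j + 1} : Finset ℕ)) with hBaddef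
  have hBadcard : Bad.card ≤ 2 * m := by
    calc Bad.card ≤ ∑ j : Fin m, ({q j, q j + 1} : Finset ℕ).card := Finset.card_biUnion_le
      _ ≤ ∑ _j : Fin m, 2 := by
          apply Finset.sum_le_sum
          intro j _
          exact (Finset.card_insert_le _ _).trans (by simp)
      _ = 2 * m := by simp [mul_comm]
  set Good : Finset ℕ := Finset.range (2*m + k + 1) \ Bad with hGooddef
  have hGoodcard : k ≤ Good.card := by
    have h1 : (Finset.range (2*m+k+1)).card - Bad.card ≤ Good.card :=
      Finset.le_card_sdiff Bad (Finset.range (2*m+k+1))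
    rw [Finset.card_range] at h1
    omega
  obtain ⟨S, hS, hScard⟩ := Finset.exists_subset_card_eq hGoodcard
  let e := S.orderIsoOfFin hScard
  set f : Fin k → ℕ := fun l => (e l : ℕ) with hfdef
  have hfG : ∀ l, f l ∈ Good := fun l => hS (e l).2
  have hflt : ∀ l, (f l : ℤ) ≤ 2*m + k := by
    intro l
    have := Finset.mem_range.mp (Finset.mem_sdiff.mp (hfG l)).1
    exact_mod_cast Nat.lt_succ_iff.mp this
  have hfnb : ∀ l, f l ∉ Bad := fun l => (Finset.mem_sdiff.mp (hfG l)).2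
  have hfin : Function.Injective f := by
    intro l₁ l₂ h
    exact e.injective (Subtype.ext h)
  refine ⟨fun l => (a + 3*(d:ℤ)*(f l) + d, a + 3*(d:ℤ)*(f l) + 2*d), ?_, ?_, ?_, ?_⟩
  · intro l
    dsimp only
    have h0 : (0:ℤ) ≤ (f l : ℤ) := Int.natCast_nonneg _
    refine ⟨by nlinarith, by nlinarith, ?_⟩
    have h1 : 3*(d:ℤ)*(f l : ℤ) ≤ 3*(d:ℤ)*(2*m + k) := by
      apply mul_le_mul_of_nonneg_left (hflt l) (by linarith)
    have h2 : (3 * d * (2 * m + k + 1) : ℤ) = 3*(d:ℤ)*(2*m+k) + 3*d := by push_cast; ring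
    rw [h2] at hlen
    linarith
  · intro l; dsimp only; linarith
  · intro l₁ l₂ hne s hs t ht
    simp only [Set.mem_Icc] at hs ht
    have hne' : f l₁ ≠ f l₂ := fun h => hne (hfin h)
    rcases lt_or_gt_of_ne hne' with h | h
    · have h1 : (f l₁ : ℤ) + 1 ≤ (f l₂ : ℤ) := by exact_mod_cast h
      have h2 : 3*(d:ℤ)*((f l₁ : ℤ) + 1) ≤ 3*(d:ℤ)*(f l₂ : ℤ) :=
        mul_le_mul_of_nonneg_left h1 (by linarith)
      have hts : (d:ℤ) ≤ t - s := by nlinarith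
      calc (d:ℤ) ≤ t - s := hts
        _ ≤ |t - s| := le_abs_self _
        _ = |s - t| := abs_sub_comm _ _
    · have h1 : (f l₂ : ℤ) + 1 ≤ (f l₁ : ℤ) := by exact_mod_cast h
      have h2 : 3*(d:ℤ)*((f l₂ : ℤ) + 1) ≤ 3*(d:ℤ)*(f l₁ : ℤ) :=
        mul_le_mul_of_nonneg_left h1 (by linarith)
      have hst : (d:ℤ) ≤ s - t := by nlinarith
      calc (d:ℤ) ≤ s - t := hst
        _ ≤ |s - t| := le_abs_self _
  · intro j l s hs t ht
    simp only [Set.mem_Icc] at hs ht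
    obtain ⟨hJ1, hJ2, hJ3, hJ4⟩ := hJ j
    have hnb := hfnb l
    have hnb' : f l ≠ q j ∧ f l ≠ q j + 1 := by
      constructor <;> intro h <;>
        exact hnb (Finset.mem_biUnion.mpr ⟨j, Finset.mem_univ _, by simp [h]⟩)
    have key : (J j).2 ≤ a + 3*(d:ℤ)*(f l) ∨ a + 3*(d:ℤ)*(f l) + 3*d ≤ (J j).1 := by
      by_contra hcon
      push_neg at hcon
      obtain ⟨hc1, hc2⟩ := hcon
      set n : ℕ := ((J j).1 - a).toNat with hndef
      have hn : (n : ℤ) = (J j).1 - a := Int.toNat_of_nonneg (by linarith)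
      have hqj : q j = n / (3 * d) := rfl
      have hq1 : 3 * d * (q j) ≤ n := by
        rw [hqj, mul_comm]
        exact Nat.div_mul_le_self n (3 * d)
      have hq2 : n < 3 * d * (q j) + 3 * d := by
        rw [hqj]
        have hdm := Nat.div_add_mod n (3 * d)
        have hmod : n % (3 * d) < 3 * d := Nat.mod_lt _ (by omega)
        linarith
      have hq1' : 3*(d:ℤ)*((q j : ℕ) : ℤ) ≤ (n : ℤ) := by exact_mod_cast hq1
      have hq2' : (n : ℤ) < 3*(d:ℤ)*((q j : ℕ) : ℤ) + 3*d := by exact_mod_cast hq2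
      have hle : q j ≤ f l := by
        have h3 : 3*(d:ℤ)*(q j : ℤ) < 3*(d:ℤ)*((f l : ℤ) + 1) := by linarith
        have h4 : ((q j : ℕ) : ℤ) < (f l : ℤ) + 1 := lt_of_mul_lt_mul_left h3 (by linarith)
        exact_mod_cast Int.lt_add_one_iff.mp h4
      have hge : f l < q j + 2 := by
        have h3 : 3*(d:ℤ)*(f l : ℤ) < 3*(d:ℤ)*((q j : ℤ) + 2) := by linarith
        have h4 : ((f l : ℕ) : ℤ) < (q j : ℤ) + 2 := lt_of_mul_lt_mul_left h3 (by linarith)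
        have h5 : f l < q j + 2 := by exact_mod_cast h4
        exact h5
      omega
    rcases key with h | h
    · have hts : (d:ℤ) ≤ t - s := by
        linarith [ht.1, hs.2]
      calc (d:ℤ) ≤ t - s := hts
        _ ≤ |t - s| := le_abs_self _
        _ = |s - t| := abs_sub_comm _ _
    · have hst : (d:ℤ) ≤ s - t := by
        linarith [ht.2, hs.1]
      calc (d:ℤ) ≤ s - t := hst
        _ ≤ |s - t| := le_abs_self _
end

section
/- Let n, L ≥ 1 be positive integers. Suppose R ⊆ ℤⁿ is an n-dimensional rectangle and S ⊆ R is a union of L generalized n-dimensional rectangles. Then R \ S can be written as a union of at most (2L+1)ⁿ pairwise disjoint generalized n-dimensional rectangles. -/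
namespace Stmt2Aux

open Finset

variable {n L : ℕ}

/-- The set of cut points in coordinate `i`. -/
noncomputable def cutSet (a b : Fin n → ℤ) (aS bS : Fin L → Fin n → ℤ) (i : Fin n) : Finset ℤ :=
  insert (a i)
    (((Finset.univ.image fun l => aS l i) ∪ (Finset.univ.image fun l => bS l i + 1)).filter
      (fun t => a i ≤ t ∧ t ≤ b i))

lemma cutSet_card_le (a b : Fin n → ℤ) (aS bS : Fin L → Fin n → ℤ) (i : Fin n) :
    (cutSet a b aS bS i).card ≤ 2 * L + 1 := by
  unfold cutSet
  calc _ ≤ _ + 1 := Finset.card_insert_le _ _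
    _ ≤ 2 * L + 1 := by
        gcongr
        calc _ ≤ ((Finset.univ.image fun l => aS l i) ∪
              (Finset.univ.image fun l => bS l i + 1)).card := Finset.card_filter_le _ _
          _ ≤ (Finset.univ.image fun l => aS l i).card +
              (Finset.univ.image fun l => bS l i + 1).card := Finset.card_union_le _ _
          _ ≤ L + L := by
              gcongr <;> simpa using Finset.card_image_le (s := (Finset.univ : Finset (Fin L)))
          _ = 2 * L := by ring

lemma a_mem_cutSet (a b : Fin n → ℤ) (aS bS : Fin L → Fin n → ℤ) (i : Fin n) :
    a i ∈ cutSet a b aS bS i := Finset.mem_insert_self _ _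

lemma mem_cutSet_bounds {a b : Fin n → ℤ} (hab : ∀ i, a i < b i) {aS bS : Fin L → Fin n → ℤ}
    {i : Fin n} {t : ℤ} (ht : t ∈ cutSet a b aS bS i) : a i ≤ t ∧ t ≤ b i := by
  rcases Finset.mem_insert.1 ht with h | h
  · exact ⟨le_of_eq h.symm, h ▸ (hab i).le⟩
  · exact (Finset.mem_filter.1 h).2

lemma aS_mem_cutSet {a b : Fin n → ℤ} {aS bS : Fin L → Fin n → ℤ}
    (habS : ∀ l i, aS l i ≤ bS l i)
    (hsub : (⋃ l, genRect (aS l) (bS l)) ⊆ genRect a b) (l : Fin L) (i : Fin n) :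
    aS l i ∈ cutSet a b aS bS i := by
  have h : aS l ∈ genRect a b := hsub (Set.mem_iUnion.2 ⟨l, fun j => ⟨le_rfl, habS l j⟩⟩)
  refine Finset.mem_insert_of_mem (Finset.mem_filter.2 ⟨?_, (h i).1, (h i).2⟩)
  exact Finset.mem_union_left _ (Finset.mem_image_of_mem _ (Finset.mem_univ l))

lemma bS_bounds {a b : Fin n → ℤ} {aS bS : Fin L → Fin n → ℤ}
    (habS : ∀ l i, aS l i ≤ bS l i)
    (hsub : (⋃ l, genRect (aS l) (bS l)) ⊆ genRect a b) (l : Fin L) (i : Fin n) :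
    a i ≤ bS l i ∧ bS l i ≤ b i := by
  have h : bS l ∈ genRect a b := hsub (Set.mem_iUnion.2 ⟨l, fun j => ⟨habS l j, le_rfl⟩⟩)
  exact h i

lemma bS_succ_mem_cutSet {a b : Fin n → ℤ} {aS bS : Fin L → Fin n → ℤ}
    (habS : ∀ l i, aS l i ≤ bS l i)
    (hsub : (⋃ l, genRect (aS l) (bS l)) ⊆ genRect a b) {l : Fin L} {i : Fin n}
    (h : bS l i + 1 ≤ b i) : bS l i + 1 ∈ cutSet a b aS bS i := by
  have hb := bS_bounds habS hsub l i
  refine Finset.mem_insert_of_mem (Finset.mem_filter.2 ⟨?_, by linarith [hb.1], h⟩)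
  exact Finset.mem_union_right _ (Finset.mem_image_of_mem _ (Finset.mem_univ l))

/-- The next cut point after `t`, or `bi + 1` if none. -/
noncomputable def nxt (P : Finset ℤ) (bi t : ℤ) : ℤ :=
  if h : (P.filter (fun u => t < u)).Nonempty then (P.filter (fun u => t < u)).min' h else bi + 1

lemma lt_nxt {P : Finset ℤ} {bi t : ℤ} (ht : t ≤ bi) : t < nxt P bi t := by
  unfold nxt
  split_ifs with h
  · exact (Finset.mem_filter.1 ((P.filter (fun u => t < u)).min'_mem h)).2
  · linarith

lemma nxt_le {P : Finset ℤ} {bi t u : ℤ} (hu : u ∈ P) (htu : t < u) : nxt P bi t ≤ u := by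
  have hne : (P.filter (fun v => t < v)).Nonempty := ⟨u, Finset.mem_filter.2 ⟨hu, htu⟩⟩
  unfold nxt
  rw [dif_pos hne]
  exact Finset.min'_le _ _ (Finset.mem_filter.2 ⟨hu, htu⟩)

lemma lt_nxt_of {P : Finset ℤ} {bi t x : ℤ} (hb : x ≤ bi)
    (h : ∀ u ∈ P, t < u → x < u) : x < nxt P bi t := by
  unfold nxt
  split_ifs with hne
  · have hm := (P.filter (fun u => t < u)).min'_mem hne
    rw [Finset.mem_filter] at hm
    exact h _ hm.1 hm.2
  · linarith

lemma nxt_le_succ {P : Finset ℤ} {bi t : ℤ} (hP : ∀ u ∈ P, u ≤ bi) : nxt P bi t ≤ bi + 1 := by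
  unfold nxt
  split_ifs with h
  · have := (P.filter (fun u => t < u)).min'_mem h
    have := hP _ (Finset.mem_filter.1 this).1
    linarith
  · exact le_rfl

section Main

variable (a b : Fin n → ℤ) (aS bS : Fin L → Fin n → ℤ)

/-- Upper end of the cell starting at `s` in coordinate `i`. -/
noncomputable def cellUB (s : Fin n → ℤ) (i : Fin n) : ℤ :=
  nxt (cutSet a b aS bS i) (b i) (s i) - 1

/-- A cell is good if it is contained in one of the small rectangles. -/
def good (s : Fin n → ℤ) : Prop :=
  ∃ l, ∀ i, aS l i ≤ s i ∧ cellUB a b aS bS s i ≤ bS l i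

open Classical in
noncomputable def badCells : Finset (Fin n → ℤ) :=
  (Fintype.piFinset (cutSet a b aS bS)).filter (fun s => ¬ good a b aS bS s)

variable {a b aS bS}

lemma coordDichotomy (hab : ∀ i, a i < b i) (habS : ∀ l i, aS l i ≤ bS l i)
    (hsub : (⋃ l, genRect (aS l) (bS l)) ⊆ genRect a b)
    {s : Fin n → ℤ} {i : Fin n} (hs : s i ∈ cutSet a b aS bS i) {l : Fin L} {x : ℤ}
    (h1 : s i ≤ x) (h2 : x ≤ cellUB a b aS bS s i) (h3 : aS l i ≤ x) (h4 : x ≤ bS l i) :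
    aS l i ≤ s i ∧ cellUB a b aS bS s i ≤ bS l i := by
  have hsb : s i ≤ b i := (mem_cutSet_bounds hab hs).2
  constructor
  · by_contra hlt
    push_neg at hlt
    have := nxt_le (bi := b i) (aS_mem_cutSet habS hsub l i) hlt
    unfold cellUB at h2
    linarith
  · by_cases hb : bS l i + 1 ≤ b i
    · have hmem := bS_succ_mem_cutSet habS hsub hb
      have hgt : s i < bS l i + 1 := by linarith
      have := nxt_le (bi := b i) hmem hgt
      unfold cellUB
      linarith
    · have hbb := (bS_bounds habS hsub l i).2
      have : bS l i = b i := by linarith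
      have := nxt_le_succ (P := cutSet a b aS bS i) (bi := b i) (t := s i)
        (fun u hu => (mem_cutSet_bounds hab hu).2)
      unfold cellUB
      linarith

lemma badCell_subset (hab : ∀ i, a i < b i) (habS : ∀ l i, aS l i ≤ bS l i)
    (hsub : (⋃ l, genRect (aS l) (bS l)) ⊆ genRect a b)
    {s : Fin n → ℤ} (hs : s ∈ badCells a b aS bS) :
    genRect s (cellUB a b aS bS s) ⊆ genRect a b \ ⋃ l, genRect (aS l) (bS l) := by
  classical
  rw [badCells, Finset.mem_filter] at hs
  obtain ⟨hsP, hbad⟩ := hs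
  rw [Fintype.mem_piFinset] at hsP
  intro x hx
  constructor
  · intro i
    have h1 := (mem_cutSet_bounds hab (hsP i)).1
    have h2 := nxt_le_succ (P := cutSet a b aS bS i) (bi := b i) (t := s i)
      (fun u hu => (mem_cutSet_bounds hab hu).2)
    have h3 := (hx i).1
    have h4 := (hx i).2
    unfold cellUB at h4
    exact ⟨by linarith, by linarith⟩
  · intro hxS
    rw [Set.mem_iUnion] at hxS
    obtain ⟨l, hl⟩ := hxS
    exact hbad ⟨l, fun i => coordDichotomy hab habS hsub (hsP i)
      (hx i).1 (hx i).2 (hl i).1 (hl i).2⟩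

end Main

section Main2

variable {a b : Fin n → ℤ} {aS bS : Fin L → Fin n → ℤ}

lemma exists_badCell (hab : ∀ i, a i < b i)
    {x : Fin n → ℤ} (hx : x ∈ genRect a b \ ⋃ l, genRect (aS l) (bS l)) :
    ∃ s ∈ badCells a b aS bS, x ∈ genRect s (cellUB a b aS bS s) := by
  classical
  obtain ⟨hxR, hxS⟩ := hx
  set s : Fin n → ℤ := fun i =>
    ((cutSet a b aS bS i).filter (fun t => t ≤ x i)).max'
      ⟨a i, Finset.mem_filter.2 ⟨a_mem_cutSet a b aS bS i, (hxR i).1⟩⟩ with hsdef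
  have hsmem : ∀ i, s i ∈ (cutSet a b aS bS i).filter (fun t => t ≤ x i) :=
    fun i => Finset.max'_mem _ _
  have hsP : ∀ i, s i ∈ cutSet a b aS bS i := fun i => (Finset.mem_filter.1 (hsmem i)).1
  have hsx : ∀ i, s i ≤ x i := fun i => (Finset.mem_filter.1 (hsmem i)).2
  have hcell : x ∈ genRect s (cellUB a b aS bS s) := by
    intro i
    refine ⟨hsx i, ?_⟩
    have hlt : x i < nxt (cutSet a b aS bS i) (b i) (s i) := by
      apply lt_nxt_of (hxR i).2
      intro u hu htu
      by_contra hle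
      push_neg at hle
      have h2 : u ≤ s i := by
        have := Finset.le_max' ((cutSet a b aS bS i).filter (fun t => t ≤ x i)) u
          (Finset.mem_filter.2 ⟨hu, hle⟩)
        simp only [hsdef]
        exact this
      omega
    unfold cellUB
    omega
  refine ⟨s, ?_, hcell⟩
  rw [badCells, Finset.mem_filter]
  refine ⟨Fintype.mem_piFinset.2 hsP, ?_⟩
  rintro ⟨l, hl⟩
  exact hxS (Set.mem_iUnion.2 ⟨l, fun i => ⟨le_trans (hl i).1 (hsx i),
    le_trans (hcell i).2 (hl i).2⟩⟩)

lemma cell_nonempty (hab : ∀ i, a i < b i) {s : Fin n → ℤ}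
    (hs : s ∈ badCells a b aS bS) (i : Fin n) : s i ≤ cellUB a b aS bS s i := by
  classical
  rw [badCells, Finset.mem_filter, Fintype.mem_piFinset] at hs
  have := lt_nxt (P := cutSet a b aS bS i) (mem_cutSet_bounds hab (hs.1 i)).2
  unfold cellUB
  omega

lemma cells_disjoint (hab : ∀ i, a i < b i) {s s' : Fin n → ℤ}
    (hs : s ∈ badCells a b aS bS) (hs' : s' ∈ badCells a b aS bS) (hne : s ≠ s') :
    Disjoint (genRect s (cellUB a b aS bS s)) (genRect s' (cellUB a b aS bS s')) := by
  classical
  rw [badCells, Finset.mem_filter, Fintype.mem_piFinset] at hs hs'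
  rw [Set.disjoint_left]
  intro x hx hx'
  apply hne
  funext i
  by_contra hnei
  rcases lt_or_gt_of_ne hnei with h | h
  · have := nxt_le (bi := b i) (hs'.1 i) h
    have h1 := (hx i).2
    have h2 := (hx' i).1
    unfold cellUB at h1
    omega
  · have := nxt_le (bi := b i) (hs.1 i) h
    have h1 := (hx' i).2
    have h2 := (hx i).1
    unfold cellUB at h1
    omega

lemma badCells_card_le : (badCells a b aS bS).card ≤ (2 * L + 1) ^ n := by
  classical
  calc (badCells a b aS bS).card ≤ (Fintype.piFinset (cutSet a b aS bS)).card :=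
        Finset.card_filter_le _ _
    _ = ∏ i, (cutSet a b aS bS i).card := Fintype.card_piFinset _
    _ ≤ ∏ _i : Fin n, (2 * L + 1) :=
        Finset.prod_le_prod (fun _ _ => Nat.zero_le _)
          (fun i _ => cutSet_card_le a b aS bS i)
    _ = (2 * L + 1) ^ n := by simp [Finset.prod_const]

end Main2

end Stmt2Aux

theorem stmt2 (n L : ℕ) (hn : 1 ≤ n) (hL : 1 ≤ L)
    (a b : Fin n → ℤ) (hab : ∀ i, a i < b i)
    (aS bS : Fin L → Fin n → ℤ) (habS : ∀ l i, aS l i ≤ bS l i)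
    (hsub : (⋃ l, genRect (aS l) (bS l)) ⊆ genRect a b) :
    ∃ N : ℕ, N ≤ (2 * L + 1) ^ n ∧ ∃ c e : Fin N → Fin n → ℤ,
      (∀ p i, c p i ≤ e p i) ∧
      (∀ p q, p ≠ q → Disjoint (genRect (c p) (e p)) (genRect (c q) (e q))) ∧
      genRect a b \ (⋃ l, genRect (aS l) (bS l)) = ⋃ p, genRect (c p) (e p) := by
  classical
  open Stmt2Aux in
  refine ⟨(badCells a b aS bS).card, badCells_card_le, ?_⟩
  set B := badCells a b aS bS with hB
  let E : B ≃ Fin B.card := B.equivFin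
  refine ⟨fun p => (E.symm p : Fin n → ℤ),
    fun p => cellUB a b aS bS (E.symm p : Fin n → ℤ), ?_, ?_, ?_⟩
  · intro p i
    exact cell_nonempty hab (E.symm p).2 i
  · intro p q hpq
    refine cells_disjoint hab (E.symm p).2 (E.symm q).2 ?_
    intro h
    exact hpq (by
      have : E.symm p = E.symm q := Subtype.ext h
      simpa using congrArg E this)
  · ext x
    constructor
    · intro hx
      obtain ⟨s, hs, hxs⟩ := exists_badCell hab hx
      refine Set.mem_iUnion.2 ⟨E ⟨s, hs⟩, ?_⟩
      simpa using hxs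
    · intro hx
      obtain ⟨p, hp⟩ := Set.mem_iUnion.1 hx
      exact badCell_subset hab habS hsub (E.symm p).2 hp
end

section
/- Let n, d₀ ≥ 1 be positive integers. Then there exists a positive integer D₀ (one may take D₀ = 4·Nₙ·d₁ for suitable explicit constants) such that for any n-dimensional rectangle R ⊆ ℤⁿ with side length at least D₀ in every direction, there is a subset M ⊆ R satisfying: (1) for any distinct x, y ∈ M, ρ(x,y) ≥ d₀ in the sup metric; (2) for every 1 ≤ i ≤ n and every x ∈ R, there exists a_i ∈ ℤ with x + a_i·e_i ∈ M. -/
section WeightedSum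

variable {n : ℕ}

def weightedSum (q : ℤ) (x : Fin n → ℤ) : ℤ := ∑ j : Fin n, q ^ (j : ℕ) * x j

lemma weightedSum_sub (q : ℤ) (x y : Fin n → ℤ) :
    weightedSum q (x - y) = weightedSum q x - weightedSum q y := by
  simp only [weightedSum, Pi.sub_apply, mul_sub, Finset.sum_sub_distrib]

lemma weightedSum_add_smul_single (q : ℤ) (x : Fin n → ℤ) (i : Fin n) (c : ℤ) :
    weightedSum q (x + c • Pi.single i 1) = weightedSum q x + q ^ (i : ℕ) * c := by
  simp [weightedSum, mul_add, Finset.sum_add_distrib, Pi.single_apply]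

lemma weightedSum_fin_succ (q : ℤ) (x : Fin (n + 1) → ℤ) :
    weightedSum q x = x 0 + q * weightedSum q (Fin.tail x) := by
  simp only [weightedSum, Fin.sum_univ_succ, Finset.mul_sum, Fin.tail]
  simp [pow_succ, mul_comm, mul_left_comm]

lemma two_mul_abs_weightedSum_lt {q : ℤ} :
    ∀ {n : ℕ} {x : Fin n → ℤ}, (∀ j, 2 * |x j| < q) → 2 * |weightedSum q x| < q ^ n
  | 0, _, _ => by simp [weightedSum]
  | n + 1, x, hx => by
    have h0 := hx 0
    have htail := two_mul_abs_weightedSum_lt (x := Fin.tail x) fun j => hx j.succ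
    have hq : 0 ≤ q := by linarith [abs_nonneg (x 0)]
    rw [weightedSum_fin_succ, pow_succ]
    calc 2 * |x 0 + q * weightedSum q (Fin.tail x)|
        ≤ 2 * |x 0| + q * (2 * |weightedSum q (Fin.tail x)|) := by
          have := abs_add_le (x 0) (q * weightedSum q (Fin.tail x))
          rw [abs_mul, abs_of_nonneg hq] at this
          linarith
      _ ≤ (q - 1) + q * (q ^ n - 1) := by gcongr <;> omega
      _ < q ^ n * q := by linarith

/-- Uniqueness of balanced base-`q` representations. -/
lemma eq_zero_of_weightedSum_eq_zero {q : ℤ} :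
    ∀ {n : ℕ} {x : Fin n → ℤ}, (∀ j, 2 * |x j| < q) → weightedSum q x = 0 → x = 0
  | 0, _, _, _ => Subsingleton.elim _ _
  | n + 1, x, hx, hsum => by
    rw [weightedSum_fin_succ] at hsum
    have hq : 0 < q := by linarith [abs_nonneg (x 0), hx 0]
    have hhead : x 0 = 0 := by
      refine Int.eq_zero_of_abs_lt_dvd (m := q) ⟨-weightedSum q (Fin.tail x), by linear_combination hsum⟩ ?_
      linarith [abs_nonneg (x 0), hx 0]
    have htail : Fin.tail x = 0 := by
      refine eq_zero_of_weightedSum_eq_zero (fun j => hx j.succ) ?_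
      rw [hhead, zero_add] at hsum
      exact (mul_eq_zero.mp hsum).resolve_left hq.ne'
    ext j
    cases j using Fin.cases with
    | zero => exact hhead
    | succ j => exact congrFun htail j

lemma eq_of_dvd_weightedSum_sub {q : ℤ} {x y : Fin n → ℤ} (hxy : ∀ j, 2 * |x j - y j| < q)
    (hdvd : q ^ n + 1 ∣ weightedSum q x - weightedSum q y) : x = y := by
  rw [← weightedSum_sub] at hdvd
  have hsmall := two_mul_abs_weightedSum_lt (x := x - y) hxy
  have hzero : weightedSum q (x - y) = 0 :=
    Int.eq_zero_of_abs_lt_dvd hdvd (by linarith [abs_nonneg (weightedSum q (x - y))])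
  exact sub_eq_zero.mp (eq_zero_of_weightedSum_eq_zero hxy hzero)

lemma exists_mem_Ico_dvd_sub (m r lo : ℤ) (hm : 0 < m) :
    ∃ c, lo ≤ c ∧ c < lo + m ∧ m ∣ c - r := by
  refine ⟨lo + (r - lo) % m, ?_, ?_, ?_⟩
  · linarith [Int.emod_nonneg (r - lo) hm.ne']
  · linarith [Int.emod_lt_of_pos (r - lo) hm]
  · have h := (Int.mod_modEq (r - lo) m).dvd
    rw [show lo + (r - lo) % m - r = -((r - lo) - (r - lo) % m) by ring]
    exact h.neg_right

/-- The step `c` along `eᵢ` is taken `≡ S x · qⁿ⁻ⁱ`, so that `qⁱ c ≡ S x · qⁿ ≡ -S x`. -/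
lemma exists_dvd_weightedSum_add_smul_single {q : ℤ} (hq : 0 ≤ q) (x : Fin n → ℤ) (i : Fin n)
    (lo : ℤ) : ∃ c, lo ≤ c ∧ c < lo + (q ^ n + 1) ∧
      q ^ n + 1 ∣ weightedSum q (x + c • Pi.single i 1) := by
  obtain ⟨c, hlo, hhi, hc⟩ := exists_mem_Ico_dvd_sub (q ^ n + 1)
    (weightedSum q x * q ^ (n - i)) lo (by positivity)
  refine ⟨c, hlo, hhi, ?_⟩
  have hpow : q ^ (i : ℕ) * q ^ (n - i) = q ^ n := by rw [← pow_add, Nat.add_sub_cancel' i.isLt.le]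
  rw [weightedSum_add_smul_single]
  have : weightedSum q x + q ^ (i : ℕ) * c =
      weightedSum q x * (q ^ n + 1) + q ^ (i : ℕ) * (c - weightedSum q x * q ^ (n - i)) := by
    linear_combination weightedSum q x * hpow
  rw [this]
  exact dvd_add (dvd_mul_left _ _) (hc.mul_left _)

end WeightedSum

lemma natAbs_sub_le_rho {n : ℕ} (x y : Fin n → ℤ) (j : Fin n) : (x j - y j).natAbs ≤ rho x y :=
  Finset.le_sup (f := fun i => (x i - y i).natAbs) (Finset.mem_univ j)

lemma add_smul_single_mem_genRect {n : ℕ} {a b x : Fin n → ℤ} (hx : x ∈ genRect a b) (i : Fin n)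
    {c : ℤ} (hlo : a i ≤ x i + c) (hhi : x i + c ≤ b i) :
    x + c • Pi.single i 1 ∈ genRect a b := by
  intro j
  rcases eq_or_ne j i with rfl | hji
  · simpa using ⟨hlo, hhi⟩
  · simpa [Pi.single_eq_of_ne hji] using hx j

theorem stmt3_general (n d₀ : ℕ) :
    ∃ D₀ : ℕ, 0 < D₀ ∧
      ∀ a b : Fin n → ℤ, (∀ i, (D₀ : ℤ) ≤ b i - a i) →
        ∃ M ⊆ genRect a b,
          (∀ x ∈ M, ∀ y ∈ M, x ≠ y → d₀ ≤ rho x y) ∧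
          (∀ i : Fin n, ∀ x ∈ genRect a b,
            ∃ c : ℤ, x + c • (Pi.single i 1 : Fin n → ℤ) ∈ M) := by
  set q : ℤ := 2 * d₀ + 1
  have hD₀ : (((2 * d₀ + 1) ^ n + 1 : ℕ) : ℤ) = q ^ n + 1 := by push_cast; rfl
  refine ⟨(2 * d₀ + 1) ^ n + 1, by positivity, fun a b hab => ?_⟩
  rw [hD₀] at hab
  refine ⟨{x | x ∈ genRect a b ∧ q ^ n + 1 ∣ weightedSum q x}, fun x hx => hx.1, ?_, ?_⟩
  · intro x hx y hy hne
    by_contra! hclose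
    refine hne (eq_of_dvd_weightedSum_sub (fun j => ?_) (dvd_sub hx.2 hy.2))
    have := natAbs_sub_le_rho x y j
    rw [Int.abs_eq_natAbs]
    omega
  · intro i x hx
    obtain ⟨c, hlo, hhi, hdvd⟩ :=
      exists_dvd_weightedSum_add_smul_single (by positivity : 0 ≤ q) x i (a i - x i)
    have := hab i
    exact ⟨c, add_smul_single_mem_genRect hx i (by omega) (by omega), hdvd⟩

theorem stmt3 (n d₀ : ℕ) (hn : 1 ≤ n) (hd : 1 ≤ d₀) :
    ∃ D₀ : ℕ, 0 < D₀ ∧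
      ∀ a b : Fin n → ℤ, (∀ i, (D₀ : ℤ) ≤ b i - a i) →
        ∃ M ⊆ genRect a b,
          (∀ x ∈ M, ∀ y ∈ M, x ≠ y → d₀ ≤ rho x y) ∧
          (∀ i : Fin n, ∀ x ∈ genRect a b,
            ∃ c : ℤ, x + c • (Pi.single i 1 : Fin n → ℤ) ∈ M) :=
  stmt3_general n d₀
end

section
/- Let n, d ≥ 1 be positive integers, let α be a non-zero integer, and let 1 ≤ i ≤ n. Set D(n,d,α) = 2|α|dⁿ − d + (|α| − 1)². Then for any generalized n-dimensional rectangle R ⊆ ℤⁿ whose side in direction e_i consists of at least D(n,d,α) points, there is a subset M ⊆ R such that: (1) distinct points of M have sup-distance at least d; (2) for every x ∈ R there exists a ∈ ℤ with x + a·α·e_i ∈ M. -/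
/-- Uniqueness of base-`d` representations: small digit differences summing to zero vanish. -/
lemma digitsum_eq_zero (d : ℕ) (hd : 1 ≤ d) :
    ∀ (m : ℕ) (D : Fin m → ℤ), (∀ k, |D k| < (d : ℤ)) →
      (∑ k : Fin m, D k * (d : ℤ) ^ (k : ℕ)) = 0 → ∀ k, D k = 0 := by
  intro m
  induction m with
  | zero => exact fun D _ _ k => k.elim0
  | succ m ih =>
    intro D hb hs
    have hrw : (∑ k : Fin (m + 1), D k * (d : ℤ) ^ (k : ℕ))
        = D 0 + (d : ℤ) * ∑ k : Fin m, D k.succ * (d : ℤ) ^ (k : ℕ) := by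
      rw [Fin.sum_univ_succ, Finset.mul_sum]
      simp only [Fin.val_zero, pow_zero, mul_one, Fin.val_succ, pow_succ]
      congr 1
      refine Finset.sum_congr rfl fun k _ => by ring
    rw [hrw] at hs
    have hd0 : (0 : ℤ) < d := by exact_mod_cast hd
    have hdvd : (d : ℤ) ∣ D 0 :=
      ⟨-(∑ k : Fin m, D k.succ * (d : ℤ) ^ (k : ℕ)), by linarith⟩
    have h0 : D 0 = 0 := Int.eq_zero_of_abs_lt_dvd hdvd (hb 0)
    have hsum : (∑ k : Fin m, D k.succ * (d : ℤ) ^ (k : ℕ)) = 0 := by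
      rw [h0, zero_add] at hs
      exact (mul_eq_zero.mp hs).resolve_left (by positivity)
    intro k
    refine Fin.cases h0 (fun k => ?_) k
    exact ih (fun k => D k.succ) (fun k => hb k.succ) hsum k

theorem stmt4 (n d : ℕ) (hn : 1 ≤ n) (hd : 1 ≤ d) (α : ℤ) (hα : α ≠ 0) (i : Fin n)
    (a b : Fin n → ℤ) (hab : ∀ j, a j ≤ b j)
    (hside : 2 * |α| * (d : ℤ) ^ n - d + (|α| - 1) ^ 2 ≤ b i - a i + 1) :
    ∃ M ⊆ genRect a b,
      (∀ x ∈ M, ∀ y ∈ M, x ≠ y → d ≤ rho x y) ∧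
      (∀ x ∈ genRect a b, ∃ c : ℤ, x + (c * α) • (Pi.single i 1 : Fin n → ℤ) ∈ M) := by
  obtain ⟨m, rfl⟩ : ∃ m, n = m + 1 := ⟨n - 1, by omega⟩
  have hd0 : (0 : ℤ) < d := by exact_mod_cast hd
  set A : ℤ := |α| with hAdef
  have hA1 : 1 ≤ A := Int.one_le_abs hα
  set K : ℤ := (d : ℤ) ^ m with hKdef
  have hK1 : 1 ≤ K := one_le_pow₀ (by exact_mod_cast hd : (1:ℤ) ≤ d)
  set s : ℤ := (1 - K * d) % A with hsdef
  have hs0 : 0 ≤ s := Int.emod_nonneg _ (by omega)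
  have hsA : s < A := Int.emod_lt_of_pos _ (by omega)
  set T : ℤ := K * d + s with hTdef
  have hTdvd : A ∣ T - 1 := by
    have h := Int.emod_def (1 - K * d) A
    exact ⟨-((1 - K * d) / A), by rw [hTdef, hsdef, h]; ring⟩
  have hTd : (d : ℤ) ≤ T := by nlinarith
  have hT0 : 0 < T := by linarith
  -- digits and the mixing function ψ
  set dig : (Fin (m + 1) → ℤ) → Fin m → ℤ :=
    fun x k => (x (i.succAbove k) - a (i.succAbove k)) % d with hdigdef
  set ψ : (Fin (m + 1) → ℤ) → ℤ :=
    fun x => ∑ k : Fin m, dig x k * (d : ℤ) ^ (k : ℕ) with hψdef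
  have hdig0 : ∀ x k, 0 ≤ dig x k := fun x k => Int.emod_nonneg _ (by omega)
  have hdigd : ∀ x k, dig x k < d := fun x k => Int.emod_lt_of_pos _ hd0
  have hψ0 : ∀ x, 0 ≤ ψ x := fun x =>
    Finset.sum_nonneg fun k _ => mul_nonneg (hdig0 x k) (by positivity)
  have hψK : ∀ x, ψ x ≤ K - 1 := by
    intro x
    have h1 : ψ x ≤ ∑ k : Fin m, ((d : ℤ) - 1) * (d : ℤ) ^ (k : ℕ) :=
      Finset.sum_le_sum fun k _ =>
        mul_le_mul_of_nonneg_right (by have := hdigd x k; omega) (by positivity)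
    have h2 : ∑ k : Fin m, ((d : ℤ) - 1) * (d : ℤ) ^ (k : ℕ) = K - 1 := by
      rw [Fin.sum_univ_eq_sum_range (fun k => ((d : ℤ) - 1) * (d : ℤ) ^ k)]
      have h3 : ∑ k ∈ Finset.range m, ((d : ℤ) - 1) * (d : ℤ) ^ k
          = (∑ k ∈ Finset.range m, (d : ℤ) ^ k) * ((d : ℤ) - 1) := by
        rw [Finset.sum_mul]; exact Finset.sum_congr rfl fun _ _ => mul_comm _ _
      rw [h3, geom_sum_mul]
    linarith
  -- ψ only depends on coordinates other than i
  refine ⟨{x | x ∈ genRect a b ∧ ∃ r : ℤ, 0 ≤ r ∧ r < A ∧ x i = a i + (ψ x * d + r * T)},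
    fun x hx => hx.1, ?_, ?_⟩
  · -- separation
    intro x hx y hy hxy
    by_contra hlt
    push_neg at hlt
    have hcl : ∀ j, |x j - y j| < (d : ℤ) := by
      intro j
      simp only [rho] at hlt
      have h1 : (x j - y j).natAbs < d :=
        lt_of_le_of_lt (Finset.le_sup (f := fun j => (x j - y j).natAbs) (Finset.mem_univ j)) hlt
      rw [Int.abs_eq_natAbs]
      exact_mod_cast h1
    obtain ⟨hxR, rx, hrx0, hrxA, hxi⟩ := hx
    obtain ⟨hyR, ry, hry0, hryA, hyi⟩ := hy
    have hX : x i - y i = (ψ x - ψ y) * d + (rx - ry) * T := by rw [hxi, hyi]; ring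
    have hbψ : -(K - 1) ≤ ψ x - ψ y ∧ ψ x - ψ y ≤ K - 1 := by
      have := hψ0 x; have := hψ0 y; have := hψK x; have := hψK y
      constructor <;> linarith
    have hXd := abs_lt.mp (hcl i)
    have hlow : (-(K - 1)) * d ≤ (ψ x - ψ y) * d :=
      mul_le_mul_of_nonneg_right hbψ.1 hd0.le
    have hhigh : (ψ x - ψ y) * d ≤ (K - 1) * d :=
      mul_le_mul_of_nonneg_right hbψ.2 hd0.le
    have hlow' : -(K * d) + d ≤ (ψ x - ψ y) * d := by
      have : (-(K - 1)) * d = -(K * d) + d := by ring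
      linarith [hlow]
    have hhigh' : (ψ x - ψ y) * d ≤ K * d - d := by
      have : (K - 1) * d = K * d - d := by ring
      linarith [hhigh]
    have hre : rx = ry := by
      by_contra hne
      rcases lt_or_gt_of_ne hne with h | h
      · have h1 : (rx - ry) * T ≤ (-1) * T :=
          mul_le_mul_of_nonneg_right (by linarith : rx - ry ≤ -1) hT0.le
        linarith [hXd.1, hXd.2]
      · have h1 : 1 * T ≤ (rx - ry) * T :=
          mul_le_mul_of_nonneg_right (by linarith : (1:ℤ) ≤ rx - ry) hT0.le
        linarith [hXd.1, hXd.2]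
    have hψe : ψ x = ψ y := by
      by_contra hne
      have h1 : 1 ≤ |ψ x - ψ y| := Int.one_le_abs (sub_ne_zero.mpr hne)
      have h2 : (d : ℤ) ≤ |(ψ x - ψ y) * d| := by
        rw [abs_mul, abs_of_nonneg hd0.le]; nlinarith
      rw [hre, sub_self, zero_mul, add_zero] at hX
      rw [← hX] at h2
      exact absurd h2 (not_le.mpr (hcl i))
    have hii : x i = y i := by
      rw [hre, sub_self, zero_mul, add_zero, hψe, sub_self, zero_mul] at hX
      linarith
    have hdall : ∀ k, dig x k = dig y k := by
      intro k
      have h0 : (∑ k : Fin m, (dig x k - dig y k) * (d : ℤ) ^ (k : ℕ)) = 0 := by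
        have : (∑ k : Fin m, (dig x k - dig y k) * (d : ℤ) ^ (k : ℕ)) = ψ x - ψ y := by
          rw [hψdef]
          rw [← Finset.sum_sub_distrib]
          exact Finset.sum_congr rfl fun _ _ => by ring
        rw [this, hψe, sub_self]
      have := digitsum_eq_zero d hd m (fun k => dig x k - dig y k)
        (fun k => by
          have h1 := hdig0 x k; have h2 := hdigd x k
          have h3 := hdig0 y k; have h4 := hdigd y k
          show |dig x k - dig y k| < (d:ℤ)
          rw [abs_lt]
          constructor <;> linarith) h0 k
      linarith
    apply hxy
    funext j
    by_cases hj : j = i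
    · rw [hj]; exact hii
    · obtain ⟨k, hk⟩ := Fin.exists_succAbove_eq hj
      have hdk := hdall k
      rw [hdigdef] at hdk
      simp only [hk] at hdk
      have hdvd : (d : ℤ) ∣ y j - x j := by
        have h := Int.ModEq.dvd (show Int.ModEq (d : ℤ) (x j - a j) (y j - a j) from hdk)
        have e : (y j - a j) - (x j - a j) = y j - x j := by ring
        rwa [e] at h
      have := Int.eq_zero_of_abs_lt_dvd hdvd (by rw [abs_sub_comm]; exact hcl j)
      linarith
  · -- covering
    intro x hx
    set p : ℤ := ψ x with hpdef
    set r : ℤ := (x i - a i - p * d) % A with hrdef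
    have hr0 : 0 ≤ r := Int.emod_nonneg _ (by omega)
    have hrA : r < A := Int.emod_lt_of_pos _ (by omega)
    set t : ℤ := a i + (p * d + r * T) with htdef
    have hdvdA : A ∣ t - x i := by
      have h1 : A ∣ (x i - a i - p * d) - r := Int.dvd_self_sub_of_emod_eq rfl
      have h2 : A ∣ r * (T - 1) := Dvd.dvd.mul_left hTdvd r
      have h3 : t - x i = r * (T - 1) - ((x i - a i - p * d) - r) := by
        rw [htdef]; ring
      rw [h3]
      exact dvd_sub h2 h1
    have hdvdα : α ∣ t - x i := (abs_dvd _ _).mp hdvdA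
    refine ⟨(t - x i) / α, ?_⟩
    have hc : (t - x i) / α * α = t - x i := Int.ediv_mul_cancel hdvdα
    set y : Fin (m + 1) → ℤ := x + ((t - x i) / α * α) • (Pi.single i 1 : Fin (m + 1) → ℤ)
      with hydef
    have hyj : ∀ j, y j = if j = i then t else x j := by
      intro j
      rw [hydef]
      by_cases hj : j = i
      · simp [hj, Pi.single_apply, hc]
      · simp [hj, Pi.single_apply]
    have hyi : y i = t := by rw [hyj]; simp
    have hψy : ψ y = p := by
      rw [hpdef, hψdef]
      refine Finset.sum_congr rfl fun k _ => ?_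
      have : y (i.succAbove k) = x (i.succAbove k) := by
        rw [hyj]; simp [Fin.succAbove_ne i k]
      rw [hdigdef]
      simp [this]
    have htub : t ≤ b i := by
      have hp0 : 0 ≤ p := hψ0 x
      have hpK : p ≤ K - 1 := hψK x
      have hpow : (d : ℤ) ^ (m + 1) = K * d := by rw [hKdef, pow_succ]
      rw [hpow] at hside
      have f1 : p * d ≤ (K - 1) * d := mul_le_mul_of_nonneg_right hpK hd0.le
      have f2 : r * T ≤ (A - 1) * T :=
        mul_le_mul_of_nonneg_right (by linarith : r ≤ A - 1) hT0.le
      have f3 : (A - 1) * T = (A - 1) * (K * d) + (A - 1) * s := by rw [hTdef]; ring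
      have f4 : (A - 1) * s ≤ (A - 1) * (A - 1) :=
        mul_le_mul_of_nonneg_left (by linarith : s ≤ A - 1) (by linarith : (0:ℤ) ≤ A - 1)
      have f5 : (A - 1) * (A - 1) = (A - 1) ^ 2 := by ring
      have f6 : (1 : ℤ) * 1 ≤ K * d :=
        mul_le_mul hK1 (by exact_mod_cast hd) (by norm_num) (by linarith)
      have f7 : (1 : ℤ) * 1 ≤ A * (K * d) :=
        mul_le_mul hA1 (by linarith) (by norm_num) (by linarith)
      linarith [f1, f2, f3, f4, f5, f6, f7]
    have hyrect : y ∈ genRect a b := by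
      intro j
      rw [hyj]
      by_cases hj : j = i
      · rw [hj, if_pos rfl]
        constructor
        · have h0 : (0:ℤ) ≤ p * d + r * T :=
            add_nonneg (mul_nonneg (hψ0 x) hd0.le) (mul_nonneg hr0 hT0.le)
          linarith
        · exact htub
      · simp only [if_neg hj]
        exact hx j
    exact ⟨hyrect, r, hr0, hrA, by rw [hyi, hψy]⟩
end

section
/- Let n, d ≥ 1 be positive integers, let α₁, …, α_m be non-zero integers, and let 1 ≤ i ≤ n. Then there exists an integer D = D(n, d, α₁, …, α_m) such that for any generalized n-dimensional rectangle R ⊆ ℤⁿ with side length at least D in direction e_i, there is a subset M ⊆ R such that: (1) distinct points of M have sup-distance at least d; (2) for every x ∈ R and every 1 ≤ j ≤ m, there exists a ∈ ℤ with x + a·α_j·e_i ∈ M. -/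
/-- Auxiliary absolute-value estimate. -/
lemma stmt5_aux_abs (d C A P u v : ℤ) (hd : 1 ≤ d) (hC : 1 ≤ C) (hA : 1 ≤ A)
    (hP : P = d * C * A + 1) (hub : |u| ≤ C - 1) (h0 : v = 0 → u ≠ 0) :
    d ≤ |d * u + v * P| := by
  have hdCA : (0:ℤ) < d * C * A := mul_pos (mul_pos (by omega) (by omega)) (by omega)
  rcases eq_or_ne v 0 with hv | hv
  · subst hv
    have hu : u ≠ 0 := h0 rfl
    have h1 : (1 : ℤ) ≤ |u| := Int.one_le_abs (by simpa using hu)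
    have : |d * u| = d * |u| := by
      rw [abs_mul, abs_of_nonneg (by omega : (0:ℤ) ≤ d)]
    simp only [zero_mul, add_zero]
    rw [this]
    nlinarith
  · have hv1 : (1 : ℤ) ≤ |v| := Int.one_le_abs (by simpa using hv)
    have hPpos : (0 : ℤ) ≤ P := by omega
    have h2 : P ≤ |v * P| := by
      rw [abs_mul, abs_of_nonneg hPpos]; nlinarith
    have h3 : |d * u| ≤ d * (C - 1) := by
      rw [abs_mul, abs_of_nonneg (by omega : (0:ℤ) ≤ d)]
      exact mul_le_mul_of_nonneg_left hub (by omega)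
    have h4 : |v * P| ≤ |d * u + v * P| + |d * u| := by
      have := abs_add_le (d * u + v * P) (-(d * u))
      simpa using this
    have h5 : d * C ≤ d * C * A := le_mul_of_one_le_right
      (mul_nonneg (by omega) (by omega)) hA
    linarith

theorem stmt5 (n d m : ℕ) (hn : 1 ≤ n) (hd : 1 ≤ d)
    (α : Fin m → ℤ) (hα : ∀ j, α j ≠ 0) (i : Fin n) :
    ∃ D : ℤ,
      ∀ a b : Fin n → ℤ, (∀ j, a j ≤ b j) → D ≤ b i - a i →
        ∃ M ⊆ genRect a b,
          (∀ x ∈ M, ∀ y ∈ M, x ≠ y → d ≤ rho x y) ∧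
          (∀ x ∈ genRect a b, ∀ j : Fin m,
            ∃ c : ℤ, x + (c * α j) • (Pi.single i 1 : Fin n → ℤ) ∈ M) := by
  classical
  set A : ℕ := ∏ j, (α j).natAbs with hAdef
  have hA : 1 ≤ A := by
    apply Finset.one_le_prod'
    intro j _
    exact Int.natAbs_pos.mpr (hα j)
  have hAdvd : ∀ j, α j ∣ (A : ℤ) := by
    intro j
    exact Int.natAbs_dvd.mp (Int.natCast_dvd_natCast.mpr
      (Finset.dvd_prod_of_mem _ (Finset.mem_univ j)))
  have hAle : ∀ j, (α j).natAbs ≤ A := by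
    intro j
    exact Nat.le_of_dvd (by omega) (Finset.dvd_prod_of_mem _ (Finset.mem_univ j))
  set C : ℕ := d ^ n with hCdef
  have hC : 1 ≤ C := Nat.one_le_pow _ _ (by omega)
  set P : ℕ := d * C * A + 1 with hPdef
  have hdP : d ≤ P := by
    have h := Nat.mul_le_mul (Nat.mul_le_mul (le_refl d) hC) hA
    simp only [mul_one] at h
    omega
  -- the color function
  have hcard : Fintype.card (Fin n → Fin d) = C := by simp [hCdef]
  let e : (Fin n → Fin d) ≃ Fin C := Fintype.equivFinOfCardEq hcard
  have hdpos : (0 : ℤ) < (d : ℤ) := by exact_mod_cast hd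
  let res : (Fin n → ℤ) → (Fin n → Fin d) := fun z k =>
    if k = i then ⟨0, hd⟩ else ⟨(z k % (d : ℤ)).toNat, by
      have h1 := Int.emod_nonneg (z k) (by omega : (d:ℤ) ≠ 0)
      have h2 := Int.emod_lt_of_pos (z k) hdpos
      omega⟩
  let r : (Fin n → ℤ) → ℕ := fun z => (e (res z) : ℕ)
  have hrlt : ∀ z, r z < C := fun z => (e (res z)).isLt
  have hr_inj : ∀ x y, r x = r y → res x = res y := by
    intro x y h
    exact e.injective (Fin.val_injective h)
  -- equal residues + different coordinate ⇒ far apart in that coordinate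
  have hres_far : ∀ (x y : Fin n → ℤ) (k : Fin n), k ≠ i → res x k = res y k →
      x k ≠ y k → d ≤ (x k - y k).natAbs := by
    intro x y k hk hres hne
    have h1 : (x k % (d : ℤ)).toNat = (y k % (d : ℤ)).toNat := by
      simpa [res, hk] using congrArg Fin.val hres
    have h2 : x k % (d : ℤ) = y k % (d : ℤ) := by
      have hx1 := Int.emod_nonneg (x k) (by omega : (d:ℤ) ≠ 0)
      have hy1 := Int.emod_nonneg (y k) (by omega : (d:ℤ) ≠ 0)
      omega
    have h3 : (d : ℤ) ∣ (x k - y k) :=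
      Int.dvd_of_emod_eq_zero (Int.emod_eq_emod_iff_emod_sub_eq_zero.mp h2)
    have h4 : d ∣ (x k - y k).natAbs :=
      Int.natCast_dvd_natCast.mp (Int.dvd_natAbs.mpr h3)
    have h5 : (x k - y k).natAbs ≠ 0 := by
      simp [Int.natAbs_eq_zero, sub_eq_zero, hne]
    exact Nat.le_of_dvd (Nat.pos_of_ne_zero h5) h4
  -- distance through a single coordinate
  have hcoord : ∀ (x y : Fin n → ℤ) (k : Fin n), d ≤ (x k - y k).natAbs → d ≤ rho x y := by
    intro x y k h
    rw [rho]
    exact le_trans h (Finset.le_sup (f := fun i => (x i - y i).natAbs) (Finset.mem_univ k))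
  refine ⟨((d * C + A * P : ℕ) : ℤ), fun a b hab hD => ?_⟩
  set M : Set (Fin n → ℤ) :=
    {z | z ∈ genRect a b ∧ ∃ k : ℕ, k < A ∧ z i = a i + (d : ℤ) * (r z) + (k : ℤ) * P}
    with hMdef
  refine ⟨M, fun z hz => hz.1, ?_, ?_⟩
  · -- separation
    rintro x ⟨hxR, kx, hkx, hxi⟩ y ⟨hyR, ky, hky, hyi⟩ hxy
    by_cases hres : res x = res y
    case pos =>
      have hr : r x = r y := by simp [r, hres]
      by_cases hk : kx = ky
      case pos =>
        have hxyi : x i = y i := by rw [hxi, hyi, hr, hk]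
        have hex : ∃ k, x k ≠ y k := by
          by_contra h
          push_neg at h
          exact hxy (funext h)
        obtain ⟨k, hkne⟩ := hex
        have hki : k ≠ i := by
          intro h; subst h; exact hkne hxyi
        exact hcoord x y k (hres_far x y k hki (by rw [hres]) hkne)
      case neg =>
        apply hcoord x y i
        have hdiff : x i - y i = ((kx : ℤ) - ky) * P := by
          rw [hxi, hyi, hr]; ring
        have heq : (x i - y i).natAbs = (kx - ky : ℤ).natAbs * P := by
          rw [hdiff, Int.natAbs_mul]
          simp
        rw [heq]
        have h1 : 1 ≤ ((kx : ℤ) - ky).natAbs := by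
          rcases Nat.lt_or_ge kx ky with h | h <;> omega
        calc d ≤ P := hdP
        _ = 1 * P := (one_mul P).symm
        _ ≤ ((kx : ℤ) - ky).natAbs * P := Nat.mul_le_mul_right P h1
    case neg =>
      apply hcoord x y i
      have hrne : r x ≠ r y := fun h => hres (hr_inj x y h)
      have hdiff : x i - y i = (d : ℤ) * ((r x : ℤ) - r y) + ((kx : ℤ) - ky) * P := by
        rw [hxi, hyi]; push_cast; ring
      have habs : (d : ℤ) ≤ |x i - y i| := by
        rw [hdiff]
        apply stmt5_aux_abs (d:ℤ) (C:ℤ) (A:ℤ) (P:ℤ) _ _ (by exact_mod_cast hd)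
          (by exact_mod_cast hC) (by exact_mod_cast hA) (by push_cast [hPdef]; ring)
        · have h1 := hrlt x; have h2 := hrlt y
          rw [abs_le]
          push_cast
          omega
        · intro _ h
          apply hrne
          have h2 : (r x : ℤ) = r y := by omega
          exact_mod_cast h2
      rw [Int.abs_eq_natAbs] at habs
      exact_mod_cast habs
  · -- coverage
    rintro x hxR j
    set t : ℕ := r x with htdef
    have hαn : ((α j).natAbs : ℤ) ≠ 0 := by
      simpa using (hα j)
    have hαpos : (0:ℤ) < ((α j).natAbs : ℤ) := by
      have := Int.natAbs_pos.mpr (hα j); exact_mod_cast this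
    set w : ℤ := x i - a i - (d : ℤ) * t with hwdef
    set k0 : ℤ := w % ((α j).natAbs : ℤ) with hk0def
    have hk0a : 0 ≤ k0 := Int.emod_nonneg w hαn
    have hk0b : k0 < ((α j).natAbs : ℤ) := Int.emod_lt_of_pos w hαpos
    have hkA : k0 < (A : ℤ) := lt_of_lt_of_le hk0b (by exact_mod_cast hAle j)
    set s : ℤ := a i + (d : ℤ) * t + k0 * P with hsdef
    have hdvd1 : α j ∣ (w - k0) := by
      have : ((α j).natAbs : ℤ) ∣ (w - k0) := by
        have := Int.emod_add_mul_ediv w ((α j).natAbs : ℤ)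
        exact ⟨w / ((α j).natAbs : ℤ), by omega⟩
      exact (Int.natAbs_dvd).mp this
    have hdvd2 : α j ∣ ((P : ℤ) - 1) := by
      have : (P : ℤ) - 1 = (d : ℤ) * C * A := by push_cast [hPdef]; ring
      rw [this]
      exact Dvd.dvd.mul_left (hAdvd j) _
    have hdvd : α j ∣ (s - x i) := by
      have : s - x i = k0 * ((P : ℤ) - 1) - (w - k0) := by
        rw [hsdef, hwdef]; ring
      rw [this]
      exact dvd_sub (Dvd.dvd.mul_left hdvd2 _) hdvd1
    refine ⟨(s - x i) / α j, ?_⟩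
    have hc : (s - x i) / α j * α j = s - x i := Int.ediv_mul_cancel hdvd
    set z : Fin n → ℤ := x + ((s - x i) / α j * α j) • (Pi.single i 1 : Fin n → ℤ) with hzdef
    have hzi : z i = s := by
      simp [hzdef, hc]
    have hzk : ∀ k, k ≠ i → z k = x k := by
      intro k hk
      simp [hzdef, Pi.single_apply, hk]
    have hresz : res z = res x := by
      funext k
      by_cases hk : k = i
      · simp [res, hk]
      · simp [res, hk, hzk k hk]
    have hrz : r z = t := by simp [r, hresz, htdef]
    -- bounds on s
    have hta : (t : ℤ) < C := by exact_mod_cast hrlt x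
    have hsb : a i ≤ s ∧ s ≤ b i := by
      constructor
      · rw [hsdef]
        have h1 : (0:ℤ) ≤ (d : ℤ) * t := mul_nonneg (by omega) (by positivity)
        have h2 : (0:ℤ) ≤ k0 * P := mul_nonneg hk0a (by positivity)
        omega
      · have h1 : (d : ℤ) * t ≤ (d : ℤ) * C :=
          mul_le_mul_of_nonneg_left (le_of_lt hta) (by omega)
        have h2 : k0 * P ≤ (A : ℤ) * P := by
          apply mul_le_mul_of_nonneg_right (le_of_lt hkA) (by positivity)
        have h3 : ((d * C + A * P : ℕ) : ℤ) ≤ b i - a i := hD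
        push_cast at h3
        rw [hsdef]
        omega
    refine ⟨fun k => ?_, k0.toNat, by omega, ?_⟩
    · by_cases hk : k = i
      · subst hk; rw [hzi]; exact hsb
      · rw [hzk k hk]; exact hxR k
    · rw [hzi, hrz, hsdef]
      congr 1
      rw [Int.toNat_of_nonneg hk0a]
end

section
/- Let n, d₀ ≥ 1 and m₁, …, mₙ ≥ 1 be positive integers, and let α_{i,j} (1 ≤ i ≤ n, 1 ≤ j ≤ m_i) be non-zero integers. Then there is a positive integer D₀ such that for any n-dimensional rectangle R ⊆ ℤⁿ with side length at least D₀ in every direction, there is a subset M ⊆ R with: (1) any two distinct points of M have sup-distance at least d₀; (2) for every 1 ≤ i ≤ n, 1 ≤ j ≤ m_i, and x ∈ R, there exists a ∈ ℤ with x + a·α_{i,j}·e_i ∈ M. -/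
private lemma sign_mul_self' (a : ℤ) : a.sign * a = a.natAbs := by
  rcases lt_trichotomy a 0 with h | h | h
  · simp [Int.sign_eq_neg_one_of_neg h, abs_of_neg h]
  · simp [h]
  · simp [Int.sign_eq_one_of_pos h, abs_of_pos h]

private lemma eq_zero_of_dvd_small (a nn : ℤ) (h : nn ∣ a) (h2 : |a| < nn) : a = 0 := by
  by_contra h0
  have := Int.le_of_dvd (abs_pos.mpr h0) ((dvd_abs nn a).mpr h)
  omega

private lemma coprime_of_prime_not_dvd (p : ℕ) (hp : p.Prime) (x : ℤ) (h : ¬ (p:ℤ) ∣ x) :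
    IsCoprime x (p:ℤ) := by
  rw [Int.isCoprime_iff_gcd_eq_one]
  have : ¬ p ∣ x.natAbs := by rwa [← Int.natCast_dvd_natCast, Int.natCast_natAbs, dvd_abs]
  have := (Nat.Prime.coprime_iff_not_dvd hp).mpr this
  simpa [Int.gcd, Nat.coprime_comm] using this.symm

/-- Carry-free base-`s` uniqueness of digit expansions. -/
private lemma digits_zero (s : ℕ) (hs : 0 < s) : ∀ (N : ℕ) (δ : Fin N → ℤ),
    (∀ i, (δ i).natAbs < s) → (∑ i, (s:ℤ) ^ i.val * δ i = 0) → ∀ i, δ i = 0 := by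
  intro N
  induction N with
  | zero => intro δ _ _ i; exact i.elim0
  | succ N ih =>
    intro δ hlt hsum
    rw [Fin.sum_univ_succ] at hsum
    have hrw : ∑ i : Fin N, (s:ℤ) ^ (Fin.succ i).val * δ i.succ
        = (s:ℤ) * ∑ i : Fin N, (s:ℤ) ^ i.val * δ i.succ := by
      rw [Finset.mul_sum]
      refine Finset.sum_congr rfl fun i _ => ?_
      rw [Fin.val_succ, pow_succ]
      ring
    rw [hrw] at hsum
    simp only [Fin.val_zero, pow_zero, one_mul] at hsum
    set T : ℤ := ∑ i : Fin N, (s:ℤ) ^ i.val * δ i.succ with hT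
    have habs0 : |δ 0| < (s:ℤ) := by
      rw [Int.abs_eq_natAbs]
      exact_mod_cast hlt 0
    have h0 : δ 0 = 0 := by
      refine eq_zero_of_dvd_small _ _ ⟨-T, ?_⟩ habs0
      linarith
    have hT0 : T = 0 := by
      have : (s:ℤ) ≠ 0 := by exact_mod_cast hs.ne'
      have hsT : (s:ℤ) * T = 0 := by linarith
      exact (mul_eq_zero.mp hsT).resolve_left this
    have hrest := ih (fun i => δ i.succ) (fun i => hlt i.succ) (by rw [← hT, hT0])
    intro i
    refine Fin.cases h0 (fun i => hrest i) i

theorem stmt6 (n d₀ : ℕ) (hn : 1 ≤ n) (hd : 1 ≤ d₀)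
    (m : Fin n → ℕ) (hm : ∀ i, 1 ≤ m i)
    (α : (i : Fin n) → Fin (m i) → ℤ) (hα : ∀ i j, α i j ≠ 0) :
    ∃ D₀ : ℕ, 0 < D₀ ∧
      ∀ a b : Fin n → ℤ, (∀ i, (D₀ : ℤ) ≤ b i - a i) →
        ∃ M ⊆ genRect a b,
          (∀ x ∈ M, ∀ y ∈ M, x ≠ y → d₀ ≤ rho x y) ∧
          (∀ i : Fin n, ∀ j : Fin (m i), ∀ x ∈ genRect a b,
            ∃ c : ℤ, x + (c * α i j) • (Pi.single i 1 : Fin n → ℤ) ∈ M) := by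
  classical
  set A : ℕ := Finset.univ.sup fun p : Σ i : Fin n, Fin (m i) => (α p.1 p.2).natAbs with hA
  obtain ⟨Q, hQB, hQprime⟩ := Nat.exists_infinite_primes (d₀ ^ n + A + d₀ + 2)
  have hQA : A < Q := by omega
  have hQd : d₀ < Q := by omega
  have hQpos : 0 < Q := hQprime.pos
  refine ⟨Q * (A + 1), by positivity, ?_⟩
  intro a b hab
  set f : (Fin n → ℤ) → ℤ := fun x => ∑ i, (d₀:ℤ) ^ i.val * x i with hf
  refine ⟨{x | x ∈ genRect a b ∧ (Q:ℤ) ∣ f x}, fun x hx => hx.1, ?_, ?_⟩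
  · -- separation
    intro x hx y hy hxy
    by_contra hlt
    push_neg at hlt
    have hlt' : (Finset.univ.sup fun i => (x i - y i).natAbs) < d₀ := hlt
    have hcoord : ∀ i, (x i - y i).natAbs < d₀ :=
      fun i => lt_of_le_of_lt
        (Finset.le_sup (f := fun i => (x i - y i).natAbs) (Finset.mem_univ i)) hlt'
    have hdvd : (Q:ℤ) ∣ f x - f y := dvd_sub hx.2 hy.2
    have hfxy : f x - f y = ∑ i, (d₀:ℤ) ^ i.val * (x i - y i) := by
      rw [hf, ← Finset.sum_sub_distrib]
      exact Finset.sum_congr rfl fun i _ => by ring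
    have habs : |f x - f y| ≤ (d₀:ℤ)^n - 1 := by
      rw [hfxy]
      calc |∑ i, (d₀:ℤ) ^ i.val * (x i - y i)| ≤ ∑ i, |(d₀:ℤ) ^ i.val * (x i - y i)| :=
            Finset.abs_sum_le_sum_abs _ _
        _ ≤ ∑ i : Fin n, (d₀:ℤ) ^ i.val * ((d₀:ℤ) - 1) := by
            refine Finset.sum_le_sum fun i _ => ?_
            rw [abs_mul, abs_pow, abs_of_nonneg (by positivity : (0:ℤ) ≤ (d₀:ℤ))]
            refine mul_le_mul_of_nonneg_left ?_ (by positivity)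
            have := hcoord i
            rw [Int.abs_eq_natAbs]
            omega
        _ = (d₀:ℤ)^n - 1 := by
            rw [← Finset.sum_mul, Fin.sum_univ_eq_sum_range (fun k => (d₀:ℤ)^k) n,
              geom_sum_mul]
    have hlarge : ((d₀:ℤ))^n - 1 < (Q:ℤ) := by
      have h1 : d₀ ^ n < Q := by omega
      have h2 : ((d₀ ^ n : ℕ) : ℤ) < (Q:ℤ) := by exact_mod_cast h1
      push_cast at h2
      omega
    have hzero : f x - f y = 0 := eq_zero_of_dvd_small _ _ hdvd (lt_of_le_of_lt habs hlarge)
    have hall := digits_zero d₀ hd n (fun i => x i - y i) hcoord (by rw [← hfxy, hzero])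
    exact hxy (funext fun i => by have h := hall i; simp only [sub_eq_zero] at h; exact h)
  · -- covering
    intro i j x hx
    set αv := α i j with hαv
    set w : ℤ := (d₀:ℤ) ^ i.val with hw
    have hαne : αv ≠ 0 := hα i j
    have hαA : αv.natAbs ≤ A :=
      Finset.le_sup (f := fun p : Σ i : Fin n, Fin (m i) => (α p.1 p.2).natAbs)
        (Finset.mem_univ (⟨i, j⟩ : Σ i : Fin n, Fin (m i)))
    have hc1 : IsCoprime αv (Q:ℤ) := by
      refine coprime_of_prime_not_dvd Q hQprime _ fun hdvd => ?_
      have h1 : (Q:ℤ) ≤ |αv| := Int.le_of_dvd (abs_pos.mpr hαne) ((dvd_abs _ _).mpr hdvd)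
      rw [Int.abs_eq_natAbs] at h1
      have : (Q:ℤ) ≤ (A:ℤ) := le_trans h1 (by exact_mod_cast hαA)
      have := hQA
      omega
    have hc2 : IsCoprime w (Q:ℤ) := by
      refine IsCoprime.pow_left (coprime_of_prime_not_dvd Q hQprime (d₀:ℤ) fun hdvd => ?_)
      have h1 : (Q:ℤ) ≤ (d₀:ℤ) := Int.le_of_dvd (by exact_mod_cast hd) hdvd
      omega
    obtain ⟨u, v, huv⟩ := hc1.mul_left hc2
    set c₀ : ℤ := -f x * u with hc₀
    have hdvd0 : (Q:ℤ) ∣ f x + c₀ * (αv * w) :=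
      ⟨v * f x, by linear_combination (-(f x)) * huv⟩
    set mlen : ℤ := (Q:ℤ) * αv.natAbs with hmlen
    have hmpos : 0 < mlen := by
      have : 0 < αv.natAbs := Int.natAbs_pos.mpr hαne
      positivity
    set u₀ : ℤ := x i + c₀ * αv with hu₀
    set t : ℤ := (b i - u₀) / mlen with ht
    set r : ℤ := (b i - u₀) % mlen with hr
    have hval : u₀ + t * mlen = b i - r := by
      have h1 := Int.mul_ediv_add_emod (b i - u₀) mlen
      have h2 : t * mlen = mlen * t := mul_comm _ _
      linarith [h1, h2]
    have hr0 : 0 ≤ r := Int.emod_nonneg _ hmpos.ne'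
    have hr1 : r < mlen := Int.emod_lt_of_pos _ hmpos
    have hmlen_le : mlen ≤ (Q:ℤ) * (A + 1) := by
      rw [hmlen]
      have h1 : (αv.natAbs : ℤ) ≤ (A:ℤ) + 1 := by exact_mod_cast le_trans hαA (Nat.le_succ A)
      have h2 : (0:ℤ) ≤ (Q:ℤ) := by positivity
      push_cast
      nlinarith
    have hab_i := hab i
    set c : ℤ := c₀ + t * Q * αv.sign with hc
    have key : c * αv = c₀ * αv + t * mlen := by
      have hs := sign_mul_self' αv
      rw [hc, hmlen]
      linear_combination (t * (Q:ℤ)) * hs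
    have hxc : x i + c * αv = b i - r := by
      rw [key]
      linarith [hval, hu₀]
    have hab_i' : ((Q:ℤ)) * ((A:ℤ) + 1) ≤ b i - a i := by push_cast at hab_i ⊢; linarith
    have hcoordi : a i ≤ x i + c * αv ∧ x i + c * αv ≤ b i := by
      constructor <;> (rw [hxc]; linarith)
    refine ⟨c, ?_, ?_⟩
    · -- genRect membership
      intro k
      by_cases hk : k = i
      · subst hk
        simpa [Pi.single_eq_same, smul_eq_mul] using hcoordi
      · simpa [Pi.single_eq_of_ne hk, smul_eq_mul] using hx k
    · -- divisibility
      have hfp : f (x + (c * αv) • (Pi.single i 1 : Fin n → ℤ)) = f x + c * αv * w := by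
        rw [hf, hw]
        simp only [Pi.add_apply, Pi.smul_apply, smul_eq_mul, mul_add, Finset.sum_add_distrib]
        congr 1
        rw [Finset.sum_eq_single i]
        · simp [Pi.single_eq_same]; ring
        · intro k _ hk
          simp [Pi.single_eq_of_ne hk]
        · intro h
          exact absurd (Finset.mem_univ i) h
      rw [hfp]
      have h2 : (Q:ℤ) ∣ t * mlen * w := ⟨t * αv.natAbs * w, by rw [hmlen]; ring⟩
      have h3 : f x + c * αv * w = (f x + c₀ * (αv * w)) + t * mlen * w := by
        rw [key]; ring
      rw [h3]
      exact dvd_add hdvd0 h2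
end

section
/- Let n, d ≥ 1 be positive integers and let v ∈ ℤⁿ have all coordinates non-zero. Then there is an integer δ = δ(n, d, v) such that for any n-dimensional rectangle R₀ ⊆ ℤⁿ, letting R₁ be the δ-extension of R₀, there is a subset M ⊆ R₁ \ R₀ such that: (1) for any distinct x, y ∈ M, ρ(x,y) ≥ d and ρ(x, ℤⁿ \ R₁) ≥ d; (2) for every x ∈ R₀ there exists a ∈ ℤ with x + a·v ∈ M. -/
/-- Encoding shift: base-`d` number built from residues mod `d`, times `d+1`. -/
def kfun (d : ℕ) {n : ℕ} (m : Fin n → ℤ) : ℤ :=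
  ((d:ℤ)+1) * ∑ j : Fin n, (m j % (d:ℤ)) * (d:ℤ)^(j:ℕ)

lemma digits_inj : ∀ (n : ℕ) (e : ℤ), 0 < e → ∀ (r r' : Fin n → ℤ),
    (∀ j, 0 ≤ r j ∧ r j < e) → (∀ j, 0 ≤ r' j ∧ r' j < e) →
    (∑ j, r j * e^(j:ℕ)) = (∑ j, r' j * e^(j:ℕ)) → ∀ j, r j = r' j := by
  intro n
  induction n with
  | zero => intro e he r r' _ _ _ j; exact j.elim0
  | succ n ih =>
    intro e he r r' hr hr' hsum
    rw [Fin.sum_univ_succ, Fin.sum_univ_succ] at hsum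
    simp only [Fin.val_zero, pow_zero, mul_one, Fin.val_succ, pow_succ] at hsum
    have hS : ∀ (s : Fin n → ℤ), ∑ j : Fin n, s j * (e^(j:ℕ) * e)
        = (∑ j : Fin n, s j * e^(j:ℕ)) * e := by
      intro s; rw [Finset.sum_mul]; congr 1; ext j; ring
    rw [hS, hS] at hsum
    have hdvd : e ∣ (r 0 - r' 0) := by
      refine ⟨(∑ j : Fin n, r' (j.succ) * e^(j:ℕ)) - (∑ j : Fin n, r (j.succ) * e^(j:ℕ)), ?_⟩
      linarith [hsum]
    have h0 : r 0 = r' 0 := by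
      have habs : |r 0 - r' 0| < e := by
        rcases hr 0 with ⟨h1, h2⟩; rcases hr' 0 with ⟨h3, h4⟩
        rw [abs_lt]; constructor <;> linarith
      have := Int.eq_zero_of_abs_lt_dvd hdvd habs
      linarith
    have hSeq : (∑ j : Fin n, r (j.succ) * e^(j:ℕ)) = ∑ j : Fin n, r' (j.succ) * e^(j:ℕ) := by
      have he' : e ≠ 0 := by positivity
      have := hsum
      rw [h0] at this
      exact mul_right_cancel₀ he' (by linarith)
    have htail := ih e he (fun j => r j.succ) (fun j => r' j.succ)
      (fun j => hr j.succ) (fun j => hr' j.succ) hSeq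
    intro j
    refine Fin.cases ?_ ?_ j
    · exact h0
    · exact htail

lemma kfun_nonneg (d : ℕ) (hd : 1 ≤ d) {n : ℕ} (m : Fin n → ℤ) : 0 ≤ kfun d m := by
  have hd' : (0:ℤ) < d := by exact_mod_cast hd
  apply mul_nonneg (by positivity)
  apply Finset.sum_nonneg
  intro j _
  exact mul_nonneg (Int.emod_nonneg _ (by positivity)) (by positivity)

lemma kfun_lt (d : ℕ) (hd : 1 ≤ d) {n : ℕ} (m : Fin n → ℤ) :
    kfun d m < ((d:ℤ)+1) * (d:ℤ)^n := by
  have hd' : (0:ℤ) < d := by exact_mod_cast hd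
  have hsum : (∑ j : Fin n, (m j % (d:ℤ)) * (d:ℤ)^(j:ℕ)) ≤ (d:ℤ)^n - 1 := by
    calc (∑ j : Fin n, (m j % (d:ℤ)) * (d:ℤ)^(j:ℕ))
        ≤ ∑ j : Fin n, ((d:ℤ) - 1) * (d:ℤ)^(j:ℕ) := by
          apply Finset.sum_le_sum
          intro j _
          have h1 := Int.emod_lt_of_pos (m j) hd'
          have h2 : m j % (d:ℤ) ≤ (d:ℤ) - 1 := by omega
          exact mul_le_mul_of_nonneg_right h2 (by positivity)
      _ = ∑ i ∈ Finset.range n, (((d:ℤ)^(i+1)) - (d:ℤ)^i) := by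
          rw [Fin.sum_univ_eq_sum_range (fun i => ((d:ℤ) - 1) * (d:ℤ)^i) n]
          apply Finset.sum_congr rfl; intro i _; ring
      _ = (d:ℤ)^n - (d:ℤ)^0 := Finset.sum_range_sub (fun i => (d:ℤ)^i) n
      _ = (d:ℤ)^n - 1 := by norm_num
  have : kfun d m ≤ ((d:ℤ)+1) * ((d:ℤ)^n - 1) :=
    mul_le_mul_of_nonneg_left hsum (by positivity)
  nlinarith [pow_pos hd' n]

/-- Two "first-exit points" along `v` whose shifted difference is ≥ d steps of `v`
cannot be within sup-distance `< d` after the shift. -/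
lemma exit_sep {n : ℕ} (d : ℕ) (hd : 1 ≤ d) (a b v : Fin n → ℤ) (hv : ∀ j, v j ≠ 0)
    (m m' : Fin n → ℤ)
    (hm1 : ∀ i, a i ≤ m i - v i ∧ m i - v i ≤ b i)
    (hm2 : ¬ ∀ i, a i ≤ m i ∧ m i ≤ b i)
    (hm'1 : ∀ i, a i ≤ m' i - v i ∧ m' i - v i ≤ b i)
    (t : ℤ) (ht : (d:ℤ) ≤ t)
    (heps : ∀ j, |m' j - m j - t * v j| < (d:ℤ)) : False := by
  push_neg at hm2
  obtain ⟨j, hj⟩ := hm2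
  have hd' : (1:ℤ) ≤ d := by exact_mod_cast hd
  obtain ⟨ha1, hb1⟩ := hm1 j
  obtain ⟨ha2, hb2⟩ := hm'1 j
  have he := abs_lt.mp (heps j)
  rcases lt_or_gt_of_ne (hv j) with hvj | hvj
  · -- v j < 0
    have hvj1 : v j ≤ -1 := by omega
    have hmj : m j < a j := by
      by_contra h
      push_neg at h
      exact absurd (hj h) (by push_neg; linarith)
    -- m' j ≥ a j + v j ; m' j ≤ m j + t * v j + (d-1)
    -- (t-1) * (-v j) ≤ d - 2 but also ≥ t - 1 ≥ d - 1
    have key : (t - 1) * (-(v j)) ≤ (d:ℤ) - 2 := by nlinarith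
    have key2 : (t - 1) ≤ (t - 1) * (-(v j)) := by nlinarith
    linarith
  · -- v j > 0
    have hvj1 : 1 ≤ v j := by omega
    have hmj : b j < m j := by
      have haj : a j ≤ m j := by linarith
      exact hj haj
    have key : (t - 1) * (v j) ≤ (d:ℤ) - 2 := by nlinarith
    have key2 : (t - 1) ≤ (t - 1) * (v j) := by nlinarith
    linarith

theorem stmt8 (n d : ℕ) (hn : 1 ≤ n) (hd : 1 ≤ d)
    (v : Fin n → ℤ) (hv : ∀ j, v j ≠ 0) :
    ∃ δ : ℤ, 0 < δ ∧
      ∀ a b : Fin n → ℤ, (∀ i, a i < b i) →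
        -- `R₁`, the δ-extension of `R₀ = genRect a b`
        ∃ M ⊆ genRect (fun i => a i - δ) (fun i => b i + δ) \ genRect a b,
          (∀ x ∈ M, ∀ y ∈ M, x ≠ y → d ≤ rho x y) ∧
          (∀ x ∈ M, ∀ y ∉ genRect (fun i => a i - δ) (fun i => b i + δ), d ≤ rho x y) ∧
          (∀ x ∈ genRect a b, ∃ c : ℤ, x + c • v ∈ M) := by
  classical
  have hd' : (1:ℤ) ≤ d := by exact_mod_cast hd
  set V : ℤ := 1 + ∑ j : Fin n, |v j| with hVdef
  set K : ℤ := ((d:ℤ)+1) * (d:ℤ)^n with hKdef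
  have hV1 : 1 ≤ V := by
    have : (0:ℤ) ≤ ∑ j : Fin n, |v j| := Finset.sum_nonneg fun j _ => abs_nonneg _
    omega
  have hvV : ∀ j, |v j| ≤ V := by
    intro j
    have h1 : |v j| ≤ ∑ i : Fin n, |v i| :=
      Finset.single_le_sum (fun i _ => abs_nonneg (v i)) (Finset.mem_univ j)
    omega
  have hK1 : 1 ≤ K := by
    have h1 : (1:ℤ) ≤ (d:ℤ)^n := one_le_pow₀ hd'
    nlinarith
  refine ⟨(K+1)*V + d, by nlinarith, ?_⟩
  intro a b hab
  -- the set M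
  set M : Set (Fin n → ℤ) :=
    {p | ∃ m : Fin n → ℤ, (∀ i, a i ≤ m i - v i ∧ m i - v i ≤ b i) ∧
      (¬ ∀ i, a i ≤ m i ∧ m i ≤ b i) ∧ p = fun i => m i + kfun d m * v i} with hMdef
  -- bounds on points of M
  have hp_bounds : ∀ m : Fin n → ℤ, (∀ i, a i ≤ m i - v i ∧ m i - v i ≤ b i) →
      ∀ i, a i - (K+1)*V ≤ m i + kfun d m * v i ∧ m i + kfun d m * v i ≤ b i + (K+1)*V := by
    intro m hm1 i
    obtain ⟨h1, h2⟩ := hm1 i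
    have hk0 := kfun_nonneg d hd m
    have hkK := kfun_lt d hd m
    rw [← hKdef] at hkK
    have habs : |(kfun d m + 1) * v i| ≤ (K+1)*V := by
      rw [abs_mul]
      apply mul_le_mul ?_ (hvV i) (abs_nonneg _) (by linarith)
      rw [abs_of_nonneg (by linarith)]
      linarith
    have h3 := abs_le.mp habs
    constructor
    · nlinarith [h3.1]
    · nlinarith [h3.2]
  -- forward closedness: points of M are outside R₀
  have hforward : ∀ m : Fin n → ℤ, (∀ i, a i ≤ m i - v i ∧ m i - v i ≤ b i) →
      (¬ ∀ i, a i ≤ m i ∧ m i ≤ b i) → ∀ k : ℤ, 0 ≤ k →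
      ¬ ∀ i, a i ≤ m i + k * v i ∧ m i + k * v i ≤ b i := by
    intro m hm1 hm2 k hk hmem
    apply hm2
    intro i
    obtain ⟨h1, h2⟩ := hm1 i
    obtain ⟨h3, h4⟩ := hmem i
    rcases lt_or_gt_of_ne (hv i) with hvi | hvi
    · have : 0 ≤ k * (-(v i)) := mul_nonneg hk (by linarith)
      constructor <;> linarith
    · have : 0 ≤ k * v i := mul_nonneg hk (by linarith)
      constructor <;> linarith
  refine ⟨M, ?_, ?_, ?_, ?_⟩
  · -- M ⊆ R₁ \ R₀
    rintro p ⟨m, hm1, hm2, rfl⟩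
    constructor
    · intro i
      obtain ⟨h1, h2⟩ := hp_bounds m hm1 i
      constructor <;> [skip; skip] <;> simp only [] <;> linarith
    · intro hmem
      exact hforward m hm1 hm2 (kfun d m) (kfun_nonneg d hd m) hmem
  · -- pairwise separation
    rintro x ⟨m, hm1, hm2, rfl⟩ y ⟨m', hm'1, hm'2, rfl⟩ hxy
    by_contra hcon
    push_neg at hcon
    have hcoord : ∀ j : Fin n,
        |(m j + kfun d m * v j) - (m' j + kfun d m' * v j)| < (d:ℤ) := by
      intro j
      have h1 : ((m j + kfun d m * v j) - (m' j + kfun d m' * v j)).natAbs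
          ≤ rho (fun i => m i + kfun d m * v i) (fun i => m' i + kfun d m' * v i) := by
        unfold rho
        exact Finset.le_sup (f := fun i => ((m i + kfun d m * v i) - (m' i + kfun d m' * v i)).natAbs)
          (Finset.mem_univ j)
      have h2 : ((m j + kfun d m * v j) - (m' j + kfun d m' * v j)).natAbs < d := by omega
      rw [Int.abs_eq_natAbs]
      exact_mod_cast h2
    by_cases hkk : kfun d m = kfun d m'
    · -- equal shifts: residues agree, so m = m', contradiction
      have hsums : (∑ j : Fin n, (m j % (d:ℤ)) * (d:ℤ)^(j:ℕ))
          = ∑ j : Fin n, (m' j % (d:ℤ)) * (d:ℤ)^(j:ℕ) := by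
        have := hkk
        unfold kfun at this
        exact mul_left_cancel₀ (by positivity) this
      have hres := digits_inj n (d:ℤ) (by positivity)
        (fun j => m j % (d:ℤ)) (fun j => m' j % (d:ℤ))
        (fun j => ⟨Int.emod_nonneg _ (by positivity), Int.emod_lt_of_pos _ (by positivity)⟩)
        (fun j => ⟨Int.emod_nonneg _ (by positivity), Int.emod_lt_of_pos _ (by positivity)⟩)
        hsums
      have hmeq : m = m' := by
        funext j
        have hdvd : (d:ℤ) ∣ (m j - m' j) := by
          have hr := hres j
          have : (m j - m' j) % (d:ℤ) = 0 := by
            rw [Int.sub_emod, hr]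
            simp
          exact Int.dvd_of_emod_eq_zero this
        have habs : |m j - m' j| < (d:ℤ) := by
          have := hcoord j
          rw [hkk] at this
          have h2 : (m j + kfun d m' * v j) - (m' j + kfun d m' * v j) = m j - m' j := by ring
          rw [h2] at this
          exact this
        have := Int.eq_zero_of_abs_lt_dvd hdvd habs
        linarith
      exact hxy (by rw [hmeq])
    · -- unequal shifts: difference of shifts is a nonzero multiple of d+1
      set t : ℤ := kfun d m - kfun d m' with htdef
      have ht0 : t ≠ 0 := sub_ne_zero_of_ne hkk
      have htdvd : ((d:ℤ)+1) ∣ t := by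
        refine ⟨(∑ j : Fin n, (m j % (d:ℤ)) * (d:ℤ)^(j:ℕ))
          - (∑ j : Fin n, (m' j % (d:ℤ)) * (d:ℤ)^(j:ℕ)), ?_⟩
        rw [htdef]
        unfold kfun
        ring
      have htabs : (d:ℤ)+1 ≤ |t| := Int.le_of_dvd (abs_pos.mpr ht0) ((dvd_abs _ _).mpr htdvd)
      have heps : ∀ j, |m' j - m j - t * v j| < (d:ℤ) := by
        intro j
        have h0 := hcoord j
        have h2 : m' j - m j - t * v j
            = -((m j + kfun d m * v j) - (m' j + kfun d m' * v j)) := by rw [htdef]; ring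
        rw [h2, abs_neg]
        exact h0
      have heps' : ∀ j, |m j - m' j - (-t) * v j| < (d:ℤ) := by
        intro j
        have h0 := hcoord j
        have h2 : m j - m' j - (-t) * v j
            = (m j + kfun d m * v j) - (m' j + kfun d m' * v j) := by rw [htdef]; ring
        rw [h2]
        exact h0
      rcases abs_cases t with ⟨habs, _⟩ | ⟨habs, _⟩
      · have ht' : (d:ℤ) ≤ t := by omega
        exact exit_sep d hd a b v hv m m' hm1 hm2 hm'1 t ht' heps
      · have ht' : (d:ℤ) ≤ -t := by omega
        exact exit_sep d hd a b v hv m' m hm'1 hm'2 hm1 (-t) ht' heps'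
  · -- far from the complement of R₁
    rintro x ⟨m, hm1, hm2, rfl⟩ y hy
    have hy' : ∃ i, y i < a i - ((K+1)*V + d) ∨ b i + ((K+1)*V + d) < y i := by
      by_contra h
      push_neg at h
      exact hy fun i => h i
    obtain ⟨i, hi⟩ := hy'
    obtain ⟨h1, h2⟩ := hp_bounds m hm1 i
    have hfar : (d:ℤ) ≤ |(m i + kfun d m * v i) - y i| := by
      rcases hi with hi | hi
      · rw [abs_of_nonneg (by linarith)]; linarith
      · rw [abs_of_nonpos (by linarith)]; linarith
    have h3 : d ≤ ((m i + kfun d m * v i) - y i).natAbs := by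
      rw [Int.abs_eq_natAbs] at hfar
      exact_mod_cast hfar
    show d ≤ rho _ y
    unfold rho
    calc d ≤ ((m i + kfun d m * v i) - y i).natAbs := h3
      _ ≤ _ := Finset.le_sup
          (f := fun j => ((m j + kfun d m * v j) - y j).natAbs) (Finset.mem_univ i)
  · -- coverage
    intro x hx
    have hx' : ∀ i, a i ≤ x i ∧ x i ≤ b i := hx
    set i0 : Fin n := ⟨0, hn⟩ with hi0
    have hbdd : ∃ B : ℤ, ∀ c : ℤ, (∀ i, a i ≤ x i + c * v i ∧ x i + c * v i ≤ b i) → c ≤ B := by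
      refine ⟨b i0 - a i0, ?_⟩
      intro c hc
      obtain ⟨h1, h2⟩ := hc i0
      obtain ⟨h3, h4⟩ := hx' i0
      rcases lt_or_gt_of_ne (hv i0) with hvi | hvi
      · -- v i0 < 0 : c * v i0 ≥ a i0 - x i0
        rcases le_or_gt c 0 with hc0 | hc0
        · linarith [hab i0]
        · have : c ≤ c * (-(v i0)) := by nlinarith
          nlinarith
      · rcases le_or_gt c 0 with hc0 | hc0
        · linarith [hab i0]
        · have : c ≤ c * v i0 := by nlinarith
          nlinarith
    have hinh : ∃ c : ℤ, (∀ i, a i ≤ x i + c * v i ∧ x i + c * v i ≤ b i) :=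
      ⟨0, fun i => by simpa using hx' i⟩
    obtain ⟨cmax, hcmax, hcub⟩ := Int.exists_greatest_of_bdd hbdd hinh
    set m : Fin n → ℤ := fun i => x i + (cmax + 1) * v i with hmdef
    have hm1 : ∀ i, a i ≤ m i - v i ∧ m i - v i ≤ b i := by
      intro i
      have := hcmax i
      constructor <;> [skip; skip] <;> simp only [hmdef] <;> linarith [this.1, this.2]
    have hm2 : ¬ ∀ i, a i ≤ m i ∧ m i ≤ b i := by
      intro h
      have : cmax + 1 ≤ cmax := hcub (cmax + 1) (fun i => by
        have := h i
        simp only [hmdef] at this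
        exact this)
      omega
    refine ⟨cmax + 1 + kfun d m, m, hm1, hm2, ?_⟩
    funext i
    simp only [hmdef, Pi.add_apply, Pi.smul_apply, smul_eq_mul]
    ring
end

section
/- Let n ≥ 1, let Δ > 4 be an integer, and suppose F(2^{ℤⁿ}) is partitioned by a clopen equivalence relation E_Δ whose classes are n-dimensional rectangles with side lengths Δ or Δ+1. Let δ < Δ/2 − 1 be a positive integer and C_δ = {x ∈ F(2^{ℤⁿ}) : ρ(x, [x] \ [x]_E) > δ}, where [x]_E is the E_Δ-class of x. Let v = (ν₁, …, νₙ) ∈ ℤⁿ have all coordinates non-zero. If Δ > 2^{n+1}(δ+1)‖v‖, then for every x ∈ F(2^{ℤⁿ}) there is an integer a with |a| ≤ Δ/2 such that (a·v)·x ∈ C_δ. -/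
/-- The space `2^{ℤⁿ}` with the product topology. -/
abbrev Space (n : ℕ) : Type := (Fin n → ℤ) → Bool

/-- The Bernoulli shift action: `(g · x)(h) = x(g + h)`. -/
def shift {n : ℕ} (g : Fin n → ℤ) (x : Space n) : Space n := fun h => x (g + h)

/-- The free part `F(2^{ℤⁿ})` of the shift action. -/
def FreePart (n : ℕ) : Set (Space n) := {x | ∀ g : Fin n → ℤ, g ≠ 0 → shift g x ≠ x}

/-- The sup norm on `ℤⁿ`, valued in `ℕ`. -/
def gnorm {n : ℕ} (g : Fin n → ℤ) : ℕ := Finset.univ.sup fun i => (g i).natAbs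

lemma shift_shift {n : ℕ} (g g' : Fin n → ℤ) (x : Space n) :
    shift g (shift g' x) = shift (g' + g) x := by
  funext h
  simp [shift, add_assoc]

lemma shift_zero {n : ℕ} (x : Space n) : shift 0 x = x := by
  funext h
  simp [shift]

lemma shift_mem_freePart {n : ℕ} {g : Fin n → ℤ} {x : Space n} (hx : x ∈ FreePart n) :
    shift g x ∈ FreePart n := by
  intro h hh hcontra
  apply hx h hh
  rw [shift_shift] at hcontra
  have h2 := congrArg (shift (-g)) hcontra
  rw [shift_shift, shift_shift] at h2
  have e1 : g + h + -g = h := by abel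
  have e2 : g + -g = 0 := by abel
  rw [e1, e2, shift_zero] at h2
  exact h2


/-!
Pull `E` back along the orbit map `g ↦ g·x`, which is injective because `x` is in the free part:
it becomes an equivalence relation on `ℤⁿ` whose classes are boxes with sides at least `Δ`.
With `M = ⌊Δ / 2‖v‖⌋`, the `2M + 1` points `a·v`, `|a| ≤ M`, lie in a box of side at most `Δ`
centred at `0`, and such a box meets at most `2ⁿ` classes: a class meeting it is determined by
which of its lower faces lie below those of the small box. By pigeonhole one class contains
`s·v` and `t·v` with `t - s ≥ 2δ`; as boxes are convex it then contains `(a ± δ)·v` for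
`a = s + δ`, and since every `|νᵢ| ≥ 1` it contains the `δ`-ball around `a·v`.
-/

open scoped Finset

lemma natAbs_le_gnorm {n : ℕ} (g : Fin n → ℤ) (i : Fin n) : (g i).natAbs ≤ gnorm g :=
  Finset.le_sup (f := fun i => (g i).natAbs) (Finset.mem_univ i)

lemma abs_le_gnorm {n : ℕ} (g : Fin n → ℤ) (i : Fin n) : |g i| ≤ gnorm g := by
  rw [Int.abs_eq_natAbs]
  exact_mod_cast natAbs_le_gnorm g i

lemma genRect_eq_Icc {n : ℕ} (a b : Fin n → ℤ) : genRect a b = Set.Icc a b := by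
  ext g
  simp only [Set.mem_Icc, Pi.le_def, ← forall_and]
  rfl

lemma shift_left_injective {n : ℕ} {x : Space n} (hx : x ∈ FreePart n) :
    Function.Injective (fun g => shift g x) := by
  intro g g' h
  by_contra hne
  have h' : shift (g - g') (shift g' x) = shift g' x := by
    simpa only [shift_shift, add_sub_cancel] using h
  exact shift_mem_freePart hx (g - g') (sub_ne_zero.mpr hne) h'

lemma exists_shift_shift_eq_iff {n : ℕ} {x : Space n} (hx : x ∈ FreePart n)
    (a b w w' : Fin n → ℤ) :
    (∃ g ∈ genRect a b, shift g (shift w x) = shift w' x) ↔ w' ∈ Set.Icc (w + a) (w + b) := by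
  simp only [genRect_eq_Icc, shift_shift]
  constructor
  · rintro ⟨g, ⟨hag, hgb⟩, hg⟩
    obtain rfl : w + g = w' := shift_left_injective hx hg
    exact ⟨add_le_add_right hag w, add_le_add_right hgb w⟩
  · rintro ⟨hw, hw'⟩
    refine ⟨w' - w, ⟨?_, ?_⟩, by rw [add_sub_cancel]⟩
    · exact le_sub_iff_add_le'.mpr hw
    · exact sub_le_iff_le_add'.mpr hw'

lemma Int.exists_add_le_of_lt_card {S : Finset ℤ} {d : ℕ} (h : d < #S) :
    ∃ s ∈ S, ∃ t ∈ S, s + d ≤ t := by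
  have hS : S.Nonempty := Finset.card_pos.mp (by omega)
  refine ⟨S.min' hS, S.min'_mem hS, S.max' hS, S.max'_mem hS, ?_⟩
  have hsub : S ⊆ Finset.Icc (S.min' hS) (S.max' hS) :=
    fun a ha => Finset.mem_Icc.mpr ⟨S.min'_le a ha, S.le_max' a ha⟩
  have := Finset.card_le_card hsub
  rw [Int.card_Icc] at this
  omega

lemma smul_mem_Icc_of_le_of_le {n : ℕ} {l h v : Fin n → ℤ} {s b t : ℤ} (hsb : s ≤ b) (hbt : b ≤ t)
    (hs : s • v ∈ Set.Icc l h) (ht : t • v ∈ Set.Icc l h) : b • v ∈ Set.Icc l h := by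
  refine ⟨fun i => ?_, fun i => ?_⟩ <;>
  · have hsi := hs.1 i; have hsi' := hs.2 i; have hti := ht.1 i; have hti' := ht.2 i
    simp only [Pi.smul_apply, smul_eq_mul] at hsi hsi' hti hti' ⊢
    rcases le_total 0 (v i) with hv | hv <;> nlinarith

lemma smul_add_mem_Icc {n : ℕ} {l h v g : Fin n → ℤ} {a δ : ℤ} (hv : ∀ i, v i ≠ 0)
    (hg : (gnorm g : ℤ) ≤ δ) (hlo : (a - δ) • v ∈ Set.Icc l h) (hhi : (a + δ) • v ∈ Set.Icc l h) :
    a • v + g ∈ Set.Icc l h := by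
  refine ⟨fun i => ?_, fun i => ?_⟩ <;>
  · have h1 := hlo.1 i; have h2 := hlo.2 i; have h3 := hhi.1 i; have h4 := hhi.2 i
    have hgi := abs_le.mp ((abs_le_gnorm g i).trans hg)
    simp only [Pi.add_apply, Pi.smul_apply, smul_eq_mul] at h1 h2 h3 h4 ⊢
    rcases (hv i).lt_or_gt with hvi | hvi <;> nlinarith

section BoxPartition

variable {n : ℕ} {Δ : ℤ} {P : (Fin n → ℤ) → (Fin n → ℤ) → Prop} {lo hi : (Fin n → ℤ) → Fin n → ℤ}
  (hbox : ∀ w w', P w w' ↔ w' ∈ Set.Icc (lo w) (hi w)) (hP : Equivalence P)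
include hbox hP

lemma self_mem_Icc_lowerCorner (w : Fin n → ℤ) : w ∈ Set.Icc (lo w) (hi w) :=
  (hbox w w).mp (hP.refl w)

variable (hside : ∀ w i, Δ ≤ hi w i - lo w i)
include hside

lemma sup_mem_Icc_of_lowerCorner_iff {c r w w' : Fin n → ℤ} (hr : ∀ i, 2 * r i ≤ Δ)
    (hw : w ∈ Set.Icc (c - r) (c + r)) (hw' : w' ∈ Set.Icc (c - r) (c + r))
    (hcorner : ∀ i, lo w i ≤ c i - r i ↔ lo w' i ≤ c i - r i) :
    lo w ⊔ lo w' ∈ Set.Icc (lo w) (hi w) := by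
  have hself := self_mem_Icc_lowerCorner hbox hP w
  refine ⟨le_sup_left, fun i => sup_le ((hself.1.trans hself.2) i) ?_⟩
  have := (self_mem_Icc_lowerCorner hbox hP w').1 i
  have := hw.1 i; have := hw'.2 i; have := hr i; have := hside w i
  simp only [Pi.sub_apply, Pi.add_apply] at *
  by_cases hlo : lo w i ≤ c i - r i
  · linarith [(hcorner i).mp hlo, hself.2 i]
  · linarith

/-- Hence a box of side at most `Δ` meets at most `2ⁿ` classes. -/
lemma rel_of_lowerCorner_iff {c r w w' : Fin n → ℤ} (hr : ∀ i, 2 * r i ≤ Δ)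
    (hw : w ∈ Set.Icc (c - r) (c + r)) (hw' : w' ∈ Set.Icc (c - r) (c + r))
    (hcorner : ∀ i, lo w i ≤ c i - r i ↔ lo w' i ≤ c i - r i) : P w w' := by
  have h := sup_mem_Icc_of_lowerCorner_iff hbox hP hside hr hw hw' hcorner
  have h' := sup_mem_Icc_of_lowerCorner_iff hbox hP hside hr hw' hw (fun i => (hcorner i).symm)
  rw [sup_comm] at h'
  exact hP.trans ((hbox _ _).mpr h) (hP.symm ((hbox _ _).mpr h'))

lemma exists_rel_smul_of_two_pow_mul_lt {v : Fin n → ℤ} {M : ℤ} {d : ℕ}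
    (hMv : ∀ i, 2 * (M * |v i|) ≤ Δ) (hcount : 2 ^ n * (d : ℤ) < 2 * M + 1) :
    ∃ s t : ℤ, -M ≤ s ∧ s + d ≤ t ∧ t ≤ M ∧ P (s • v) (t • v) := by
  classical
  set r : Fin n → ℤ := fun i => M * |v i|
  have hline : ∀ a ∈ Finset.Icc (-M) M, a • v ∈ Set.Icc (0 - r) (0 + r) := by
    intro a ha
    have hai : ∀ i, |a * v i| ≤ r i := fun i => by
      rw [abs_mul]
      exact mul_le_mul_of_nonneg_right (abs_le.mpr (Finset.mem_Icc.mp ha)) (abs_nonneg _)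
    exact ⟨fun i => by simpa using (abs_le.mp (hai i)).1,
      fun i => by simpa using (abs_le.mp (hai i)).2⟩
  let corner : ℤ → Fin n → Bool := fun a i => decide (lo (a • v) i ≤ (0 : Fin n → ℤ) i - r i)
  have hcard : #(Finset.univ : Finset (Fin n → Bool)) * d < #(Finset.Icc (-M) M) := by
    rw [Finset.card_univ, Fintype.card_fun, Fintype.card_bool, Fintype.card_fin, Int.card_Icc]
    have : ((2 ^ n * d : ℕ) : ℤ) < 2 * M + 1 := by push_cast; exact hcount
    omega
  obtain ⟨y, -, hy⟩ := Finset.exists_lt_card_fiber_of_mul_lt_card_of_maps_to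
    (fun a _ => Finset.mem_univ (corner a)) hcard
  obtain ⟨s, hs, t, ht, hst⟩ := Int.exists_add_le_of_lt_card hy
  rw [Finset.mem_filter, Finset.mem_Icc] at hs ht
  refine ⟨s, t, hs.1.1, hst, ht.1.2, rel_of_lowerCorner_iff hbox hP hside hMv
    (hline s (Finset.mem_Icc.mpr hs.1)) (hline t (Finset.mem_Icc.mpr ht.1)) fun i => ?_⟩
  simpa [corner] using congrFun (hs.2.trans ht.2.symm) i

theorem exists_smul_add_rel (hn : 1 ≤ n) {δ : ℤ} (hδ : 0 < δ) {v : Fin n → ℤ}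
    (hv : ∀ i, v i ≠ 0) (hΔv : 2 ^ (n + 1) * (δ + 1) * (gnorm v : ℤ) < Δ) :
    ∃ a : ℤ, 2 * |a| ≤ Δ ∧ ∀ g, (gnorm g : ℤ) ≤ δ → P (a • v) (a • v + g) := by
  set K : ℤ := (gnorm v : ℤ)
  have hK : 1 ≤ K := by
    have := abs_le_gnorm v ⟨0, hn⟩
    have := abs_pos.mpr (hv ⟨0, hn⟩)
    omega
  set M := Δ / (2 * K)
  have hMK : M * (2 * K) ≤ Δ := Int.ediv_mul_le Δ (by omega)
  have hM : 2 ^ n * 2 * (δ + 1) < 2 * (M + 1) := by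
    rw [← pow_succ]
    exact lt_of_mul_lt_mul_right
      (by linarith [Int.lt_ediv_add_one_mul_self Δ (by omega : 0 < 2 * K)]) (by omega : 0 ≤ K)
  have h2n : 1 ≤ (2 : ℤ) ^ n := one_le_pow₀ one_le_two
  have hM0 : 0 ≤ M := by nlinarith
  have hMv : ∀ i, 2 * (M * |v i|) ≤ Δ := fun i => by
    nlinarith [mul_le_mul_of_nonneg_left (abs_le_gnorm v i) hM0]
  have hcount : 2 ^ n * (((2 * δ).toNat : ℕ) : ℤ) < 2 * M + 1 := by
    rw [Int.toNat_of_nonneg (by omega)]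
    nlinarith
  obtain ⟨s, t, hs, hst, ht, hrel⟩ := exists_rel_smul_of_two_pow_mul_lt hbox hP hside hMv hcount
  rw [Int.toNat_of_nonneg (by omega)] at hst
  have hsmem := self_mem_Icc_lowerCorner hbox hP (s • v)
  have htmem := (hbox _ _).mp hrel
  have hsa : P (s • v) ((s + δ) • v) :=
    (hbox _ _).mpr (smul_mem_Icc_of_le_of_le (by omega) (by omega) hsmem htmem)
  have hmem : ∀ b, s ≤ b → b ≤ t → b • v ∈ Set.Icc (lo ((s + δ) • v)) (hi ((s + δ) • v)) :=
    fun b hsb hbt => (hbox _ _).mp (hP.trans (hP.symm hsa)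
      ((hbox _ _).mpr (smul_mem_Icc_of_le_of_le hsb hbt hsmem htmem)))
  refine ⟨s + δ, ?_, fun g hg => (hbox _ _).mpr (smul_add_mem_Icc hv hg
    (hmem _ (by omega) (by omega)) (hmem _ (by omega) (by omega)))⟩
  have : |s + δ| ≤ M := abs_le.mpr ⟨by omega, by omega⟩
  nlinarith [mul_le_mul_of_nonneg_left hK hM0]

end BoxPartition

theorem stmt12_general (n : ℕ) (hn : 1 ≤ n) (Δ : ℤ)
    (E : FreePart n → FreePart n → Prop) (hEquiv : Equivalence E)
    -- every `E`-class is an `n`-dimensional rectangle with side lengths `Δ` or `Δ+1`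
    (hclass : ∀ x : FreePart n, ∃ a b : Fin n → ℤ,
      (∀ i, a i ≤ 0 ∧ 0 ≤ b i) ∧
      (∀ i, b i - a i = Δ ∨ b i - a i = Δ + 1) ∧
      (∀ y : FreePart n, E x y ↔ ∃ g ∈ genRect a b, shift g (x : Space n) = (y : Space n)))
    (δ : ℤ) (hδpos : 0 < δ)
    (v : Fin n → ℤ) (hv : ∀ i, v i ≠ 0)
    (hΔv : 2 ^ (n + 1) * (δ + 1) * (gnorm v : ℤ) < Δ) :
    ∀ x : FreePart n, ∃ a : ℤ, 2 * |a| ≤ Δ ∧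
      -- `(a·v)·x` belongs to `C_δ`: every orbit point within distance `δ` of it
      -- lies in its `E`-class
      (∀ g : Fin n → ℤ, (gnorm g : ℤ) ≤ δ →
        E ⟨shift (a • v) (x : Space n), shift_mem_freePart x.2⟩
          ⟨shift g (shift (a • v) (x : Space n)),
            shift_mem_freePart (shift_mem_freePart x.2)⟩) := by
  intro x
  choose A B _ hside hiff using hclass
  let z : (Fin n → ℤ) → FreePart n := fun w => ⟨shift w x, shift_mem_freePart x.2⟩
  have hbox : ∀ w w', E (z w) (z w') ↔ w' ∈ Set.Icc (w + A (z w)) (w + B (z w)) :=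
    fun w w' => (hiff (z w) (z w')).trans (exists_shift_shift_eq_iff x.2 _ _ w w')
  have hsideΔ : ∀ w i, Δ ≤ (w + B (z w)) i - (w + A (z w)) i := fun w i => by
    rcases hside (z w) i with h | h <;> simp only [Pi.add_apply] <;> omega
  obtain ⟨a, ha, hball⟩ := exists_smul_add_rel hbox (hEquiv.comap z) hsideΔ hn hδpos hv hΔv
  refine ⟨a, ha, fun g hg => ?_⟩
  convert hball g hg using 1
  exact Subtype.ext (shift_shift g (a • v) x)

theorem stmt12 (n : ℕ) (hn : 1 ≤ n) (Δ : ℤ) (hΔ : 4 < Δ)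
    (E : FreePart n → FreePart n → Prop) (hEquiv : Equivalence E)
    (hclopen : IsClopen {p : FreePart n × FreePart n | E p.1 p.2})
    -- every `E`-class is an `n`-dimensional rectangle with side lengths `Δ` or `Δ+1`
    (hclass : ∀ x : FreePart n, ∃ a b : Fin n → ℤ,
      (∀ i, a i ≤ 0 ∧ 0 ≤ b i) ∧
      (∀ i, b i - a i = Δ ∨ b i - a i = Δ + 1) ∧
      (∀ y : FreePart n, E x y ↔ ∃ g ∈ genRect a b, shift g (x : Space n) = (y : Space n)))
    (δ : ℤ) (hδpos : 0 < δ) (hδ : 2 * δ < Δ - 2)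
    (v : Fin n → ℤ) (hv : ∀ i, v i ≠ 0)
    (hΔv : 2 ^ (n + 1) * (δ + 1) * (gnorm v : ℤ) < Δ) :
    ∀ x : FreePart n, ∃ a : ℤ, 2 * |a| ≤ Δ ∧
      -- `(a·v)·x` belongs to `C_δ`: every orbit point within distance `δ` of it
      -- lies in its `E`-class
      (∀ g : Fin n → ℤ, (gnorm g : ℤ) ≤ δ →
        E ⟨shift (a • v) (x : Space n), shift_mem_freePart x.2⟩
          ⟨shift g (shift (a • v) (x : Space n)),
            shift_mem_freePart (shift_mem_freePart x.2)⟩) :=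
  stmt12_general n hn Δ E hEquiv hclass δ hδpos v hv hΔv
end
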